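/- arXiv:1610.00901 — 12 statements merged into one kernel-verified Lean document; each statement's English description precedes it below -/
import Mathlib

section
/- For the Budgeted Max Weighted Coverage problem, the optimum value OPT_f of the LP relaxation is at most 2e/(e-1) times the optimum value OPT of the integer program: OPT_f ≤ (2e/(e-1))·OPT. -/
open Finset


/-- The set of elements covered by the family of sets indexed by `A`. -/
def lpCov {n m : ℕ} (S : Fin m → Finset (Fin n)) (A : Finset (Fin m)) : Finset (Fin n) :=
  univ.filter fun j => ∃ i ∈ A, j ∈ S i

lemma lpCov_mono {n m : ℕ} (S : Fin m → Finset (Fin n)) {A A' : Finset (Fin m)}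
    (h : A ⊆ A') : lpCov S A ⊆ lpCov S A' := by
  simp only [lpCov, subset_iff, mem_filter, mem_univ, true_and]
  rintro j ⟨i, hi, hj⟩
  exact ⟨i, h hi, hj⟩

lemma lpCov_insert {n m : ℕ} (S : Fin m → Finset (Fin n)) (i : Fin m) (A : Finset (Fin m)) :
    lpCov S (insert i A) = S i ∪ lpCov S A := by
  ext j
  simp [lpCov, mem_insert, or_and_right, exists_or]

lemma lpCov_singleton {n m : ℕ} (S : Fin m → Finset (Fin n)) (i : Fin m) :
    lpCov S {i} = S i := by
  ext j; simp [lpCov]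

lemma subset_lpCov {n m : ℕ} (S : Fin m → Finset (Fin n)) {i : Fin m} {A : Finset (Fin m)}
    (hi : i ∈ A) : S i ⊆ lpCov S A := by
  intro j hj
  simp only [lpCov, mem_filter, mem_univ, true_and]
  exact ⟨i, hi, hj⟩

lemma lpF_insert {n m : ℕ} (w : Fin n → ℝ) (S : Fin m → Finset (Fin n)) (i : Fin m)
    (A : Finset (Fin m)) :
    ∑ j ∈ lpCov S (insert i A), w j
      = (∑ j ∈ S i \ lpCov S A, w j) + ∑ j ∈ lpCov S A, w j := by
  rw [lpCov_insert, ← Finset.sum_union Finset.sdiff_disjoint, Finset.sdiff_union_self_eq_union]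

lemma lpF_mono {n m : ℕ} (w : Fin n → ℝ) (hw : ∀ j, 0 ≤ w j) (S : Fin m → Finset (Fin n))
    {A A' : Finset (Fin m)} (h : A ⊆ A') :
    ∑ j ∈ lpCov S A, w j ≤ ∑ j ∈ lpCov S A', w j :=
  Finset.sum_le_sum_of_subset_of_nonneg (lpCov_mono S h) (fun j _ _ => hw j)

/-- double counting -/
lemma lpDouble {n m : ℕ} (w : Fin n → ℝ) (S : Fin m → Finset (Fin n)) (x : Fin m → ℝ)
    (C : Finset (Fin n)) :
    ∑ i, x i * ∑ j ∈ S i \ C, w j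
      = ∑ j ∈ univ \ C, (∑ i ∈ univ.filter (fun i => j ∈ S i), x i) * w j := by
  have h1 : ∀ i : Fin m, x i * ∑ j ∈ S i \ C, w j
      = ∑ j ∈ univ \ C, if j ∈ S i then x i * w j else 0 := by
    intro i
    rw [Finset.mul_sum, Finset.sum_ite_mem]
    congr 1
    ext j; simp [mem_sdiff, and_comm]
  simp_rw [h1]
  rw [Finset.sum_comm]
  refine Finset.sum_congr rfl fun j _ => ?_
  rw [Finset.sum_ite, Finset.sum_const_zero, add_zero, Finset.sum_mul]


/-- Greedy analysis: there is a feasible family `D` plus one extra set `i` covering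
weight at least `(1-1/e)·V`. -/
lemma lpGood {n m : ℕ} (w : Fin n → ℝ) (hw : ∀ j, 0 ≤ w j)
    (S : Fin m → Finset (Fin n)) (c : Fin m → ℝ) (B : ℝ) (hB : 0 < B)
    (hc : ∀ i, 0 ≤ c i) (hcB : ∀ i, c i ≤ B)
    (x : Fin m → ℝ) (hx0 : ∀ i, 0 ≤ x i) (hxB : (∑ i, c i * x i) ≤ B)
    (V : ℝ) (hV0 : 0 ≤ V)
    (hkey : ∀ A : Finset (Fin m),
      V ≤ (∑ j ∈ lpCov S A, w j) + ∑ i, x i * ∑ j ∈ S i \ lpCov S A, w j)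
    (hm : 0 < m) :
    ∃ (D : Finset (Fin m)) (i : Fin m), (∑ t ∈ D, c t) ≤ B ∧
      (1 - Real.exp (-1)) * V ≤ ∑ j ∈ lpCov S (insert i D), w j := by
  suffices h : ∀ k (A : Finset (Fin m)), (univ \ A).card ≤ k → (∑ t ∈ A, c t) ≤ B →
      V - (∑ j ∈ lpCov S A, w j) ≤ Real.exp (-(∑ t ∈ A, c t) / B) * V →
      ∃ (D : Finset (Fin m)) (i : Fin m), (∑ t ∈ D, c t) ≤ B ∧
        (1 - Real.exp (-1)) * V ≤ ∑ j ∈ lpCov S (insert i D), w j by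
    refine h m ∅ (by simp) (by simp [hB.le]) ?_
    have h0 : (0:ℝ) ≤ ∑ j ∈ lpCov S (∅ : Finset (Fin m)), w j :=
      Finset.sum_nonneg fun j _ => hw j
    simp only [Finset.sum_empty, neg_zero, zero_div, Real.exp_zero, one_mul]
    linarith
  intro k
  induction k with
  | zero =>
    intro A hcard hcost hinv
    -- A = univ; show the terminal case must apply
    have hAuniv : A = univ := by
      have : univ \ A = ∅ := Finset.card_eq_zero.mp (Nat.le_zero.mp hcard)
      have := Finset.sdiff_eq_empty_iff_subset.mp this
      exact Finset.univ_subset_iff.mp this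
    by_cases hR : V - (∑ j ∈ lpCov S A, w j) ≤ Real.exp (-1) * V
    · refine ⟨A, ⟨0, hm⟩, hcost, ?_⟩
      have hmono : ∑ j ∈ lpCov S A, w j ≤ ∑ j ∈ lpCov S (insert ⟨0, hm⟩ A), w j :=
        lpF_mono w hw S (Finset.subset_insert _ _)
      linarith
    · -- contradiction: marginal sum over univ \ A = ∅ is 0 but R > 0
      exfalso
      push_neg at hR
      have hkA := hkey A
      have hmzero : ∀ i : Fin m, (∑ j ∈ S i \ lpCov S A, w j) = 0 := by
        intro i
        have : S i \ lpCov S A = ∅ := by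
          rw [Finset.sdiff_eq_empty_iff_subset]
          exact subset_lpCov S (hAuniv ▸ Finset.mem_univ i)
        simp [this]
      have : V ≤ ∑ j ∈ lpCov S A, w j := by
        simpa [hmzero] using hkA
      have hexp : 0 ≤ Real.exp (-1) * V := by positivity
      linarith
  | succ k ih =>
    intro A hcard hcost hinv
    by_cases hR : V - (∑ j ∈ lpCov S A, w j) ≤ Real.exp (-1) * V
    · refine ⟨A, ⟨0, hm⟩, hcost, ?_⟩
      have hmono : ∑ j ∈ lpCov S A, w j ≤ ∑ j ∈ lpCov S (insert ⟨0, hm⟩ A), w j :=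
        lpF_mono w hw S (Finset.subset_insert _ _)
      linarith
    · push_neg at hR
      set fA := ∑ j ∈ lpCov S A, w j with hfA
      set R := V - fA with hRdef
      have hRpos : 0 < R := by
        have : 0 ≤ Real.exp (-1) * V := by positivity
        simp only [hRdef]; linarith
      -- find a good set i ∉ A
      have hfind : ∃ i ∈ univ \ A, c i * R ≤ B * ∑ j ∈ S i \ lpCov S A, w j := by
        by_contra hcon
        push_neg at hcon
        -- sum of x i * marginal over i ∉ A is at least R
        have hkA := hkey A
        have hsplit : ∑ i, x i * ∑ j ∈ S i \ lpCov S A, w j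
            = ∑ i ∈ univ \ A, x i * ∑ j ∈ S i \ lpCov S A, w j := by
          rw [← Finset.sum_sdiff (Finset.subset_univ A)]
          have : ∀ i ∈ A, x i * ∑ j ∈ S i \ lpCov S A, w j = 0 := by
            intro i hi
            have : S i \ lpCov S A = ∅ := by
              rw [Finset.sdiff_eq_empty_iff_subset]; exact subset_lpCov S hi
            simp [this]
          rw [Finset.sum_eq_zero this, add_zero]
        have hsum : R ≤ ∑ i ∈ univ \ A, x i * ∑ j ∈ S i \ lpCov S A, w j := by
          rw [← hsplit]; simp only [hRdef, hfA]; linarith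
        -- some term is positive
        have hterm : ∃ i₀ ∈ univ \ A, 0 < x i₀ * ∑ j ∈ S i₀ \ lpCov S A, w j := by
          by_contra hcon2
          push_neg at hcon2
          have : ∑ i ∈ univ \ A, x i * ∑ j ∈ S i \ lpCov S A, w j ≤ 0 :=
            Finset.sum_nonpos hcon2
          linarith
        obtain ⟨i₀, hi₀, hpos⟩ := hterm
        -- strict comparison: B * Σ x·marg < R * Σ x·c over univ \ A
        have hstrict : B * ∑ i ∈ univ \ A, x i * ∑ j ∈ S i \ lpCov S A, w j
            < R * ∑ i ∈ univ \ A, x i * c i := by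
          rw [Finset.mul_sum, Finset.mul_sum]
          apply Finset.sum_lt_sum
          · intro i hi
            have h1 := hcon i hi
            have hx := hx0 i
            nlinarith [Finset.sum_nonneg (fun j (_ : j ∈ S i \ lpCov S A) => hw j)]
          · refine ⟨i₀, hi₀, ?_⟩
            have h1 := hcon i₀ hi₀
            have hxpos : 0 < x i₀ := by
              rcases lt_or_eq_of_le (hx0 i₀) with h | h
              · exact h
              · exfalso; rw [← h] at hpos; simp at hpos
            nlinarith
        have hcsum : ∑ i ∈ univ \ A, x i * c i ≤ B := by
          calc ∑ i ∈ univ \ A, x i * c i ≤ ∑ i, x i * c i := by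
                apply Finset.sum_le_sum_of_subset_of_nonneg (Finset.subset_univ _)
                intro i _ _; exact mul_nonneg (hx0 i) (hc i)
            _ = ∑ i, c i * x i := by simp_rw [mul_comm]
            _ ≤ B := hxB
        nlinarith
      obtain ⟨i, hiA, hgood⟩ := hfind
      have hiA' : i ∉ A := (Finset.mem_sdiff.mp hiA).2
      set g := ∑ j ∈ S i \ lpCov S A, w j with hg
      have hgR : c i * R / B ≤ g := by
        rw [div_le_iff₀ hB] at *
        linarith [hgood]
      by_cases hfit : (∑ t ∈ A, c t) + c i ≤ B
      · -- recurse with insert i A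
        have hcard' : (univ \ insert i A).card ≤ k := by
          have hss : univ \ insert i A ⊂ univ \ A := by
            refine Finset.ssubset_iff_of_subset (Finset.sdiff_subset_sdiff (le_refl _)
              (Finset.subset_insert _ _)) |>.mpr ?_
            exact ⟨i, hiA, by simp⟩
          have := Finset.card_lt_card hss
          omega
        have hcost' : (∑ t ∈ insert i A, c t) ≤ B := by
          rw [Finset.sum_insert hiA']; linarith
        refine ih (insert i A) hcard' hcost' ?_
        -- invariant
        have hfins : ∑ j ∈ lpCov S (insert i A), w j = g + fA := lpF_insert w S i A
        rw [hfins, Finset.sum_insert hiA']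
        have e1 : V - (g + fA) ≤ (1 - c i / B) * R := by
          have : c i / B * R ≤ g := by
            rw [div_mul_eq_mul_div]; exact hgR
          simp only [hRdef]; nlinarith
        have e2 : (1 - c i / B) * R ≤ Real.exp (-(c i) / B) * R := by
          have h1 : 1 - c i / B ≤ Real.exp (-(c i / B)) := by
            have := Real.add_one_le_exp (-(c i / B))
            linarith
          have : Real.exp (-(c i / B)) = Real.exp (-(c i) / B) := by ring_nf
          nlinarith [hRpos.le]
        have e3 : Real.exp (-(c i) / B) * R
            ≤ Real.exp (-(c i) / B) * (Real.exp (-(∑ t ∈ A, c t) / B) * V) := by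
          apply mul_le_mul_of_nonneg_left _ (Real.exp_nonneg _)
          simpa [hRdef, hfA] using hinv
        have e4 : Real.exp (-(c i) / B) * (Real.exp (-(∑ t ∈ A, c t) / B) * V)
            = Real.exp (-(c i + ∑ t ∈ A, c t) / B) * V := by
          rw [← mul_assoc, ← Real.exp_add]
          ring_nf
        linarith
      · -- budget exceeded: finish with D = A and this i
        push_neg at hfit
        refine ⟨A, i, hcost, ?_⟩
        have hfins : ∑ j ∈ lpCov S (insert i A), w j = g + fA := lpF_insert w S i A
        rw [hfins]
        -- V - (g + fA) ≤ (1 - c i/B) * R ≤ exp(-(ci)/B)*exp(-costA/B)*V ≤ exp(-1)*V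
        have hcb : 0 ≤ 1 - c i / B := by
          have := hcB i
          rw [sub_nonneg, div_le_one hB]; exact this
        have e1 : V - (g + fA) ≤ (1 - c i / B) * R := by
          have : c i / B * R ≤ g := by
            rw [div_mul_eq_mul_div]; exact hgR
          simp only [hRdef]; nlinarith
        have e2 : (1 - c i / B) * R
            ≤ (1 - c i / B) * (Real.exp (-(∑ t ∈ A, c t) / B) * V) := by
          apply mul_le_mul_of_nonneg_left _ hcb
          simpa [hRdef, hfA] using hinv
        have e3 : (1 - c i / B) * (Real.exp (-(∑ t ∈ A, c t) / B) * V)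
            ≤ Real.exp (-(c i) / B) * (Real.exp (-(∑ t ∈ A, c t) / B) * V) := by
          have h1 : 1 - c i / B ≤ Real.exp (-(c i) / B) := by
            have := Real.add_one_le_exp (-(c i / B))
            have h2 : Real.exp (-(c i / B)) = Real.exp (-(c i) / B) := by ring_nf
            linarith [h2 ▸ this]
          have h2 : 0 ≤ Real.exp (-(∑ t ∈ A, c t) / B) * V := by positivity
          nlinarith
        have e4 : Real.exp (-(c i) / B) * (Real.exp (-(∑ t ∈ A, c t) / B) * V)
            ≤ Real.exp (-1) * V := by
          rw [← mul_assoc, ← Real.exp_add]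
          apply mul_le_mul_of_nonneg_right _ hV0
          apply Real.exp_le_exp.mpr
          rw [← add_div]
          rw [div_le_iff₀ hB]
          · linarith
        linarith
/-- For the Budgeted Max Weighted Coverage problem, the optimum value
`OPTf` of the LP relaxation is at most `2e/(e-1)` times the optimum value `OPT` of the
integer program. -/
theorem lp_vs_ip_coverage (n m : ℕ) (w : Fin n → ℝ) (hw : ∀ j, 0 ≤ w j)
    (S : Fin m → Finset (Fin n)) (c : Fin m → ℝ) (B : ℝ) (hB : 0 < B)
    (hc : ∀ i, 0 ≤ c i) (hcB : ∀ i, c i ≤ B)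
    (OPT OPTf : ℝ)
    (hOPT : IsGreatest {val : ℝ | ∃ (x : Fin m → ℝ) (z : Fin n → ℝ),
        (∀ i, x i = 0 ∨ x i = 1) ∧ (∀ j, z j = 0 ∨ z j = 1) ∧
        (∀ j, z j ≤ ∑ i ∈ univ.filter (fun i => j ∈ S i), x i) ∧
        (∑ i, c i * x i) ≤ B ∧ val = ∑ j, w j * z j} OPT)
    (hOPTf : IsGreatest {val : ℝ | ∃ (x : Fin m → ℝ) (z : Fin n → ℝ),
        (∀ i, 0 ≤ x i ∧ x i ≤ 1) ∧ (∀ j, 0 ≤ z j ∧ z j ≤ 1) ∧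
        (∀ j, z j ≤ ∑ i ∈ univ.filter (fun i => j ∈ S i), x i) ∧
        (∑ i, c i * x i) ≤ B ∧ val = ∑ j, w j * z j} OPTf) :
    OPTf ≤ (2 * Real.exp 1 / (Real.exp 1 - 1)) * OPT := by
  have hE1 : (1:ℝ) < Real.exp 1 := by
    have := Real.add_one_le_exp (1:ℝ); linarith
  -- OPT is nonnegative
  have hOPT0 : 0 ≤ OPT := by
    refine hOPT.2 ⟨fun _ => 0, fun _ => 0, fun i => Or.inl rfl, fun j => Or.inl rfl,
      fun j => Finset.sum_nonneg fun i _ => le_refl 0, by simp [hB.le], by simp⟩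
  -- OPTf is nonnegative
  have hOPTf0 : 0 ≤ OPTf := by
    refine hOPTf.2 ⟨fun _ => 0, fun _ => 0, fun i => ⟨le_refl 0, zero_le_one⟩,
      fun j => ⟨le_refl 0, zero_le_one⟩,
      fun j => Finset.sum_nonneg fun i _ => le_refl 0, by simp [hB.le], by simp⟩
  -- a feasible integral value for any family D with cost ≤ B
  have hint : ∀ D : Finset (Fin m), (∑ t ∈ D, c t) ≤ B →
      (∑ j ∈ lpCov S D, w j) ≤ OPT := by
    intro D hD
    apply hOPT.2
    refine ⟨fun i => if i ∈ D then 1 else 0, fun j => if j ∈ lpCov S D then 1 else 0,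
      fun i => by by_cases h : i ∈ D <;> simp [h],
      fun j => by by_cases h : j ∈ lpCov S D <;> simp [h], ?_, ?_, ?_⟩
    · intro j
      by_cases h : j ∈ lpCov S D
      · simp only [h, if_pos]
        obtain ⟨i₀, hi₀, hj₀⟩ : ∃ i ∈ D, j ∈ S i := by
          simpa [lpCov] using h
        calc (1:ℝ) = (if i₀ ∈ D then (1:ℝ) else 0) := by simp [hi₀]
          _ ≤ ∑ i ∈ univ.filter (fun i => j ∈ S i), (if i ∈ D then (1:ℝ) else 0) := by
              apply Finset.single_le_sum (f := fun i => if i ∈ D then (1:ℝ) else 0)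
              · intro i _; by_cases h : i ∈ D <;> simp [h]
              · simp [hj₀]
      · simp only [h, if_neg, not_false_iff]
        apply Finset.sum_nonneg
        intro i _; by_cases h : i ∈ D <;> simp [h]
    · calc ∑ i, c i * (if i ∈ D then (1:ℝ) else 0) = ∑ i ∈ D, c i := by
            simp [mul_ite, Finset.sum_ite_mem]
        _ ≤ B := hD
    · rw [eq_comm]
      simp [mul_ite, Finset.sum_ite_mem]
  -- the LP optimal solution
  obtain ⟨x, z, hx01, hz01, hzc, hxB, hval⟩ := hOPTf.1
  -- key inequality for all A
  have hkey : ∀ A : Finset (Fin m),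
      OPTf ≤ (∑ j ∈ lpCov S A, w j) + ∑ i, x i * ∑ j ∈ S i \ lpCov S A, w j := by
    intro A
    rw [lpDouble w S x (lpCov S A)]
    have hsplit : OPTf = (∑ j ∈ lpCov S A, w j * z j)
        + ∑ j ∈ univ \ lpCov S A, w j * z j := by
      rw [hval, ← Finset.sum_sdiff (Finset.subset_univ (lpCov S A)), add_comm]
    rw [hsplit]
    have h1 : ∑ j ∈ lpCov S A, w j * z j ≤ ∑ j ∈ lpCov S A, w j := by
      apply Finset.sum_le_sum
      intro j _
      nlinarith [(hz01 j).2, hw j]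
    have h2 : ∑ j ∈ univ \ lpCov S A, w j * z j
        ≤ ∑ j ∈ univ \ lpCov S A, (∑ i ∈ univ.filter (fun i => j ∈ S i), x i) * w j := by
      apply Finset.sum_le_sum
      intro j _
      rw [mul_comm]
      exact mul_le_mul_of_nonneg_right (hzc j) (hw j)
    linarith
  -- case m = 0
  rcases Nat.eq_zero_or_pos m with hm | hm
  · subst hm
    have hOPTfle : OPTf ≤ 0 := by
      rw [hval]
      apply Finset.sum_nonpos
      intro j _
      have h1 := hzc j
      have h2 : ∑ i ∈ univ.filter (fun i => j ∈ S i), x i = 0 := by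
        apply Finset.sum_eq_zero; intro i _; exact absurd i.2 (Nat.not_lt_zero _)
      nlinarith [(hz01 j).1, hw j]
    have : 0 ≤ 2 * Real.exp 1 / (Real.exp 1 - 1) * OPT := by
      apply mul_nonneg _ hOPT0
      exact div_nonneg (by positivity) (by linarith)
    linarith
  -- main case
  obtain ⟨D, i, hD, hDi⟩ := lpGood w hw S c B hB hc hcB
    (fun i => x i) (fun i => (hx01 i).1) hxB OPTf hOPTf0 hkey hm
  -- f (insert i D) ≤ f D + f {i} ≤ 2 OPT
  have hsub : ∑ j ∈ lpCov S (insert i D), w j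
      ≤ (∑ j ∈ lpCov S D, w j) + ∑ j ∈ lpCov S {i}, w j := by
    rw [lpF_insert w S i D, lpCov_singleton]
    have : ∑ j ∈ S i \ lpCov S D, w j ≤ ∑ j ∈ S i, w j :=
      Finset.sum_le_sum_of_subset_of_nonneg (Finset.sdiff_subset) (fun j _ _ => hw j)
    linarith
  have hD1 : (∑ j ∈ lpCov S D, w j) ≤ OPT := hint D hD
  have hD2 : (∑ j ∈ lpCov S {i}, w j) ≤ OPT := by
    apply hint
    rw [Finset.sum_singleton]; exact hcB i
  have hfin : (1 - Real.exp (-1)) * OPTf ≤ 2 * OPT := by linarith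
  -- algebra
  have hEpos : (0:ℝ) < Real.exp 1 := Real.exp_pos 1
  have hE1' : (0:ℝ) < Real.exp 1 - 1 := by linarith
  rw [div_mul_eq_mul_div, le_div_iff₀ hE1']
  have hinv : Real.exp (-1) * Real.exp 1 = 1 := by
    rw [← Real.exp_add]; norm_num
  nlinarith [mul_le_mul_of_nonneg_right hfin hEpos.le]
end

section
/- For every x ∈ [0,1]^m, the smoothed coverage objective satisfies F(x) ≥ (1 - 1/e)·L(x), where F(x) = Σ_{j∈[n]} w_j·(1 - Π_{i∈T_j}(1 - x_i)) and L(x) = Σ_{j∈[n]} w_j·min{1, Σ_{i∈T_j} x_i}. -/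
/-!
Fix an element `j` and put `s = Σ_{i ∈ T_j} x_i`. Since `1 - t ≤ e^{-t}`, the product
`Π_{i ∈ T_j} (1 - x_i)` is at most `e^{-s}`. The function `s ↦ 1 - e^{-s}` is concave and
vanishes at `0`, so it lies above the chord `(1 - 1/e) s` on `[0, 1]`, and it is at least
`1 - 1/e` for `s ≥ 1`; hence `1 - e^{-s} ≥ (1 - 1/e) min {1, s}`. Summing with the weights
`w_j ≥ 0` gives the theorem.
-/

open Finset

theorem Finset.prod_one_sub_le_exp_neg_sum {ι : Type*} (s : Finset ι) {x : ι → ℝ}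
    (hx : ∀ i ∈ s, x i ≤ 1) :
    ∏ i ∈ s, (1 - x i) ≤ Real.exp (-∑ i ∈ s, x i) := by
  rw [← Finset.sum_neg_distrib, Real.exp_sum]
  exact Finset.prod_le_prod (fun i hi => by linarith [hx i hi])
    fun i _ => Real.one_sub_le_exp_neg (x i)

theorem Real.one_sub_inv_exp_one_mul_min_le {s : ℝ} (hs : 0 ≤ s) :
    (1 - (Real.exp 1)⁻¹) * min 1 s ≤ 1 - Real.exp (-s) := by
  rcases le_total 1 s with h1s | hs1
  · have : Real.exp (-s) ≤ (Real.exp 1)⁻¹ := by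
      rw [← Real.exp_neg]
      exact Real.exp_le_exp.2 (by linarith)
    rw [min_eq_left h1s]
    linarith
  · have chord : Real.exp (s * (-1) + (1 - s) * 0) ≤ s * Real.exp (-1) + (1 - s) * Real.exp 0 :=
      convexOn_exp.2 (Set.mem_univ _) (Set.mem_univ _) hs (by linarith) (by ring)
    rw [show s * (-1) + (1 - s) * 0 = -s by ring, Real.exp_neg 1, Real.exp_zero] at chord
    rw [min_eq_right hs1]
    linarith

theorem one_sub_inv_exp_one_mul_min_sum_le_one_sub_prod {ι : Type*} (s : Finset ι) {x : ι → ℝ}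
    (hx : ∀ i ∈ s, 0 ≤ x i ∧ x i ≤ 1) :
    (1 - (Real.exp 1)⁻¹) * min 1 (∑ i ∈ s, x i) ≤ 1 - ∏ i ∈ s, (1 - x i) := by
  have hsum : 0 ≤ ∑ i ∈ s, x i := Finset.sum_nonneg fun i hi => (hx i hi).1
  calc (1 - (Real.exp 1)⁻¹) * min 1 (∑ i ∈ s, x i)
      ≤ 1 - Real.exp (-∑ i ∈ s, x i) := Real.one_sub_inv_exp_one_mul_min_le hsum
    _ ≤ 1 - ∏ i ∈ s, (1 - x i) :=
      sub_le_sub_left (s.prod_one_sub_le_exp_neg_sum fun i hi => (hx i hi).2) 1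

/-- For every `x ∈ [0,1]^m`, the smoothed coverage objective satisfies
`F(x) ≥ (1 - 1/e) · L(x)`, where `F(x) = Σ_j w_j (1 - Π_{i ∈ T_j} (1 - x_i))` and
`L(x) = Σ_j w_j · min {1, Σ_{i ∈ T_j} x_i}`. -/
theorem smoothed_coverage_lower_bound (n m : ℕ) (w : Fin n → ℝ) (hw : ∀ j, 0 ≤ w j)
    (S : Fin m → Finset (Fin n)) (x : Fin m → ℝ)
    (hx : ∀ i, 0 ≤ x i ∧ x i ≤ 1) :
    ∑ j, w j * (1 - ∏ i ∈ univ.filter (fun i => j ∈ S i), (1 - x i)) ≥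
      (1 - 1 / Real.exp 1) *
        ∑ j, w j * min 1 (∑ i ∈ univ.filter (fun i => j ∈ S i), x i) := by
  rw [ge_iff_le, Finset.mul_sum, one_div]
  refine Finset.sum_le_sum fun j _ => ?_
  rw [mul_left_comm]
  exact mul_le_mul_of_nonneg_left
    (one_sub_inv_exp_one_mul_min_sum_le_one_sub_prod _ fun i _ => hx i) (hw j)
end

section
/- Fix x ∈ [0,1]^m and two indices i ≠ j with c_i, c_j > 0. Define x^{i,j}_ε to be the vector obtained from x by replacing x_i with x_i + ε and x_j with x_j - ε·c_i/c_j, leaving all other coordinates unchanged. Then the function ε ↦ F(x^{i,j}_ε) is convex on the interval [max{-x_i, (x_j - 1)·c_j/c_i}, min{1 - x_i, x_j·c_j/c_i}] of ε for which x^{i,j}_ε ∈ [0,1]^m. -/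
/-!
Along the line `ε ↦ x^{i,j}_ε` only the coordinates `i` and `j` move, with slopes `1` and
`-c_i/c_j` of opposite signs. Hence in each coverage term `∏_{l ∈ T_k} (1 - x_l)` at most two
factors vary, both affine in `ε`, and the others are non-negative
constants. The product is therefore a quadratic in `ε` with non-positive leading coefficient, so
each term `w_k (1 - ∏ …)` is convex on all of `ℝ`, and so is their sum.
-/

open Finset

theorem convexOn_finset_sum {𝕜 E β ι : Type*} [Semiring 𝕜] [PartialOrder 𝕜] [AddCommMonoid E]
    [AddCommMonoid β] [PartialOrder β] [IsOrderedAddMonoid β] [SMul 𝕜 E] [Module 𝕜 β]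
    {s : Set E} (hs : Convex 𝕜 s) (t : Finset ι) {f : ι → E → β}
    (hf : ∀ k ∈ t, ConvexOn 𝕜 s (f k)) : ConvexOn 𝕜 s fun x => ∑ k ∈ t, f k x := by
  classical
  induction t using Finset.induction_on with
  | empty => simpa using convexOn_const 0 hs
  | insert k t hk ih =>
    simp_rw [sum_insert hk]
    exact (hf k (mem_insert_self k t)).add (ih fun l hl => hf l (mem_insert_of_mem hl))

theorem concaveOn_affine_mul_affine {a b c d : ℝ} (hbd : b * d ≤ 0) :
    ConcaveOn ℝ Set.univ fun t : ℝ => (a + t * b) * (c + t * d) := by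
  refine ⟨convex_univ, fun x _ y _ p q hp hq hpq => ?_⟩
  obtain rfl : q = 1 - p := by linarith
  have gap : (a + (p * x + (1 - p) * y) * b) * (c + (p * x + (1 - p) * y) * d)
      - (p * ((a + x * b) * (c + x * d)) + (1 - p) * ((a + y * b) * (c + y * d)))
      = -(b * d) * (p * (1 - p)) * (x - y) ^ 2 := by ring
  have gap_nonneg :=
    mul_nonneg (mul_nonneg (neg_nonneg.2 hbd) (mul_nonneg hp hq)) (sq_nonneg (x - y))
  simp only [smul_eq_mul]
  linarith

theorem concaveOn_prod_add_mul {ι : Type*} [Fintype ι] [DecidableEq ι] {i j : ι} (hij : i ≠ j)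
    {p v : ι → ℝ} (hp : ∀ l, l ≠ i → l ≠ j → 0 ≤ p l) (hv : ∀ l, l ≠ i → l ≠ j → v l = 0)
    (hvij : v i * v j ≤ 0) :
    ConcaveOn ℝ Set.univ fun t : ℝ => ∏ l, (p l + t * v l) := by
  have hj : j ∈ univ.erase i := mem_erase.2 ⟨hij.symm, mem_univ j⟩
  have hrest : ∀ l ∈ (univ.erase i).erase j, l ≠ i ∧ l ≠ j := fun l hl =>
    ⟨(mem_erase.1 (mem_erase.1 hl).2).1, (mem_erase.1 hl).1⟩
  set C := ∏ l ∈ (univ.erase i).erase j, p l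
  have hC : 0 ≤ C := prod_nonneg fun l hl => hp l (hrest l hl).1 (hrest l hl).2
  have hsplit : ∀ t : ℝ, C • ((p i + t * v i) * (p j + t * v j)) = ∏ l, (p l + t * v l) := by
    intro t
    rw [← mul_prod_erase _ _ (mem_univ i), ← mul_prod_erase _ _ hj,
      prod_congr rfl fun l hl => by rw [hv l (hrest l hl).1 (hrest l hl).2, mul_zero, add_zero],
      smul_eq_mul]
    ring
  exact ((concaveOn_affine_mul_affine hvij).smul hC).congr fun t _ => hsplit t

theorem concaveOn_prod_one_sub_update_update {ι : Type*} [Fintype ι] [DecidableEq ι]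
    (T : Finset ι) {x : ι → ℝ} {i j : ι} (hij : i ≠ j) (hx : ∀ l, l ≠ i → l ≠ j → x l ≤ 1)
    {r : ℝ} (hr : 0 ≤ r) :
    ConcaveOn ℝ Set.univ fun ε : ℝ =>
      ∏ l ∈ T, (1 - Function.update (Function.update x i (x i + ε)) j (x j - ε * r) l) := by
  set d : ι → ℝ := Function.update (Function.update 0 i (-1)) j r
  have hshift : ∀ ε l, 1 - Function.update (Function.update x i (x i + ε)) j (x j - ε * r) l
      = (1 - x l) + ε * d l := by
    intro ε l
    rcases eq_or_ne l j with rfl | hlj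
    · simp only [d, Function.update_self]; ring
    rcases eq_or_ne l i with rfl | hli
    · simp only [d, Function.update_of_ne hlj, Function.update_self]; ring
    · simp only [d, Function.update_of_ne hlj, Function.update_of_ne hli, Pi.zero_apply]; ring
  refine (concaveOn_prod_add_mul hij (p := fun l => if l ∈ T then 1 - x l else 1)
    (v := fun l => if l ∈ T then d l else 0) ?_ ?_ ?_).congr fun ε _ => ?_
  · intro l hli hlj
    split_ifs
    · linarith [hx l hli hlj]
    · exact zero_le_one
  · intro l hli hlj
    simp [d, hli, hlj]
  · simp only [d, Function.update_self, Function.update_of_ne hij]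
    split_ifs <;> simp [hr]
  · rw [← prod_ite_mem_eq]
    exact prod_congr rfl fun l _ => by split_ifs <;> simp [hshift]

/-- Fix `x ∈ [0,1]^m` and two indices `i ≠ j` with positive costs.
The function `ε ↦ F(x^{i,j}_ε)`, where `x^{i,j}_ε` replaces `x_i` by `x_i + ε` and
`x_j` by `x_j - ε c_i / c_j`, is convex on the interval
`[max{-x_i, (x_j - 1) c_j / c_i}, min{1 - x_i, x_j c_j / c_i}]`. -/
theorem pipage_step_convex (n m : ℕ) (w : Fin n → ℝ) (hw : ∀ j, 0 ≤ w j)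
    (S : Fin m → Finset (Fin n)) (c : Fin m → ℝ) (hc : ∀ i, 0 < c i)
    (x : Fin m → ℝ) (hx : ∀ i, 0 ≤ x i ∧ x i ≤ 1)
    (i j : Fin m) (hij : i ≠ j) :
    ConvexOn ℝ
      (Set.Icc (max (-(x i)) ((x j - 1) * c j / c i))
        (min (1 - x i) (x j * c j / c i)))
      (fun ε : ℝ => ∑ k, w k *
        (1 - ∏ l ∈ univ.filter (fun l => k ∈ S l),
          (1 - Function.update (Function.update x i (x i + ε)) j (x j - ε * c i / c j) l))) := by
  simp_rw [mul_div_assoc]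
  have hr : 0 ≤ c i / c j := (div_pos (hc i) (hc j)).le
  refine convexOn_finset_sum (convex_Icc _ _) univ fun k _ => ?_
  exact (((convexOn_const 1 convex_univ).sub (concaveOn_prod_one_sub_update_update _ hij
    (fun l _ _ => (hx l).2) hr)).smul (hw k)).subset (Set.subset_univ _) (convex_Icc _ _)
end

section
/- For every x ∈ [0,1]^m with Σ_{i∈[m]} c_i x_i ≤ B, there exists x' ∈ [0,1]^m with Σ_{i∈[m]} c_i x'_i ≤ B such that x' has at most one non-integral coordinate and F(x') ≥ F(x). -/
open Finset


private lemma prod_split {m : ℕ} (T : Finset (Fin m)) {i j : Fin m} (hij : i ≠ j)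
    (f : Fin m → ℝ) :
    ∏ k ∈ T, f k =
      (if i ∈ T then f i else 1) * (if j ∈ T then f j else 1) *
        ∏ k ∈ (T.erase i).erase j, f k := by
  by_cases hi : i ∈ T <;> by_cases hj : j ∈ T
  · have hj' : j ∈ T.erase i := Finset.mem_erase.mpr ⟨hij.symm, hj⟩
    rw [if_pos hi, if_pos hj, mul_assoc, Finset.mul_prod_erase _ f hj',
      Finset.mul_prod_erase _ f hi]
  · rw [if_pos hi, if_neg hj,
      Finset.erase_eq_of_notMem (fun h => hj (Finset.mem_of_mem_erase h)), mul_one,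
      Finset.mul_prod_erase _ f hi]
  · rw [if_neg hi, if_pos hj, Finset.erase_eq_of_notMem hi, one_mul,
      Finset.mul_prod_erase _ f hj]
  · rw [if_neg hi, if_neg hj, Finset.erase_eq_of_notMem hi,
      Finset.erase_eq_of_notMem hj, one_mul, one_mul]

private lemma elem_quad {m : ℕ} (T : Finset (Fin m)) {i j : Fin m} (hij : i ≠ j)
    (a b : ℝ) (x : Fin m → ℝ) (t : ℝ) :
    (∏ k ∈ T, (1 - (if k = i then x i + a * t else if k = j then x j - b * t else x k)))
      = (∏ k ∈ T, (1 - x k))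
        + ((∏ k ∈ T, (1 - (if k = i then x i + a else if k = j then x j - b else x k)))
            - (∏ k ∈ T, (1 - x k))
            + (if i ∈ T ∧ j ∈ T then a * b * ∏ k ∈ (T.erase i).erase j, (1 - x k) else 0)) * t
        - (if i ∈ T ∧ j ∈ T then a * b * ∏ k ∈ (T.erase i).erase j, (1 - x k) else 0) * t ^ 2 := by
  have htail : ∀ g : Fin m → ℝ, (∀ k, k ≠ i → k ≠ j → g k = x k) →
      ∏ k ∈ (T.erase i).erase j, (1 - g k) = ∏ k ∈ (T.erase i).erase j, (1 - x k) := by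
    intro g hg
    refine Finset.prod_congr rfl fun k hk => ?_
    have hk' := Finset.mem_erase.mp hk
    have hk'' := Finset.mem_erase.mp hk'.2
    rw [hg k hk''.1 hk'.1]
  have h1 : (∏ k ∈ (T.erase i).erase j,
      (1 - (if k = i then x i + a * t else if k = j then x j - b * t else x k)))
      = ∏ k ∈ (T.erase i).erase j, (1 - x k) :=
    htail _ (fun k hki hkj => by simp [hki, hkj])
  have h2 : (∏ k ∈ (T.erase i).erase j,
      (1 - (if k = i then x i + a else if k = j then x j - b else x k)))
      = ∏ k ∈ (T.erase i).erase j, (1 - x k) :=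
    htail _ (fun k hki hkj => by simp [hki, hkj])
  rw [prod_split T hij (fun k => 1 - (if k = i then x i + a * t else if k = j then x j - b * t else x k)),
    prod_split T hij (fun k => 1 - x k),
    prod_split T hij (fun k => 1 - (if k = i then x i + a else if k = j then x j - b else x k)),
    h1, h2]
  by_cases hi : i ∈ T <;> by_cases hj : j ∈ T <;>
    simp only [hi, hj, if_pos, if_neg, if_true, if_false, and_true, and_false, true_and,
      false_and, if_neg hij, if_neg (Ne.symm hij), if_pos rfl, ite_true, ite_false] <;>
    ring

private def Fv (n m : ℕ) (w : Fin n → ℝ) (S : Fin m → Finset (Fin n)) (x : Fin m → ℝ) : ℝ :=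
  ∑ j, w j * (1 - ∏ i ∈ univ.filter (fun i => j ∈ S i), (1 - x i))

private lemma F_quad (n m : ℕ) (w : Fin n → ℝ) (hw : ∀ j, 0 ≤ w j)
    (S : Fin m → Finset (Fin n)) {i j : Fin m} (hij : i ≠ j)
    {a b : ℝ} (ha : 0 ≤ a) (hb : 0 ≤ b) (x : Fin m → ℝ)
    (hx1 : ∀ k, x k ≤ 1) :
    ∃ β γ : ℝ, 0 ≤ γ ∧ ∀ t : ℝ,
      Fv n m w S (fun k => if k = i then x i + a * t else if k = j then x j - b * t else x k)
        = Fv n m w S x + β * t + γ * t ^ 2 := by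
  set T : Fin n → Finset (Fin m) := fun e => univ.filter (fun i => e ∈ S i) with hT
  set C : Fin n → ℝ := fun e =>
    w e * (if i ∈ T e ∧ j ∈ T e then a * b * ∏ k ∈ ((T e).erase i).erase j, (1 - x k) else 0)
    with hC
  set A : Fin n → ℝ := fun e => w e * (1 - ∏ k ∈ T e, (1 - x k)) with hA
  set B : Fin n → ℝ := fun e =>
    w e * (1 - ∏ k ∈ T e, (1 - (if k = i then x i + a else if k = j then x j - b else x k)))
      - A e - C e with hB
  refine ⟨∑ e, B e, ∑ e, C e, ?_, ?_⟩
  · refine Finset.sum_nonneg fun e _ => ?_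
    refine mul_nonneg (hw e) ?_
    by_cases h : i ∈ T e ∧ j ∈ T e
    · rw [if_pos h]
      refine mul_nonneg (mul_nonneg ha hb) (Finset.prod_nonneg fun k _ => by linarith [hx1 k])
    · rw [if_neg h]
  · intro t
    have step : ∀ e ∈ (univ : Finset (Fin n)),
        w e * (1 - ∏ k ∈ T e,
          (1 - (if k = i then x i + a * t else if k = j then x j - b * t else x k)))
          = A e + B e * t + C e * t ^ 2 := by
      intro e _
      rw [elem_quad (T e) hij a b x t, hB, hA, hC]
      by_cases h : i ∈ T e ∧ j ∈ T e
      · simp only [if_pos h]; ring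
      · simp only [if_neg h]; ring
    calc Fv n m w S (fun k => if k = i then x i + a * t else if k = j then x j - b * t else x k)
        = ∑ e, (A e + B e * t + C e * t ^ 2) := Finset.sum_congr rfl step
      _ = (∑ e, A e) + (∑ e, B e) * t + (∑ e, C e) * t ^ 2 := by
          rw [Finset.sum_add_distrib, Finset.sum_add_distrib, ← Finset.sum_mul, ← Finset.sum_mul]
      _ = Fv n m w S x + (∑ e, B e) * t + (∑ e, C e) * t ^ 2 := rfl

private lemma pipage_aux (n m : ℕ) (w : Fin n → ℝ) (hw : ∀ j, 0 ≤ w j)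
    (S : Fin m → Finset (Fin n)) (c : Fin m → ℝ) (hc : ∀ i, 0 < c i) :
    ∀ N : ℕ, ∀ x : Fin m → ℝ,
      (univ.filter fun k => ¬(x k = 0 ∨ x k = 1)).card ≤ N →
      (∀ i, 0 ≤ x i ∧ x i ≤ 1) →
      ∃ x' : Fin m → ℝ, (∀ i, 0 ≤ x' i ∧ x' i ≤ 1) ∧
        (∑ i, c i * x' i = ∑ i, c i * x i) ∧
        (∀ i j : Fin m, ¬(x' i = 0 ∨ x' i = 1) → ¬(x' j = 0 ∨ x' j = 1) → i = j) ∧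
        Fv n m w S x' ≥ Fv n m w S x := by
  have base : ∀ x : Fin m → ℝ, (univ.filter fun k => ¬(x k = 0 ∨ x k = 1)).card ≤ 1 →
      (∀ i, 0 ≤ x i ∧ x i ≤ 1) →
      ∃ x' : Fin m → ℝ, (∀ i, 0 ≤ x' i ∧ x' i ≤ 1) ∧
        (∑ i, c i * x' i = ∑ i, c i * x i) ∧
        (∀ i j : Fin m, ¬(x' i = 0 ∨ x' i = 1) → ¬(x' j = 0 ∨ x' j = 1) → i = j) ∧
        Fv n m w S x' ≥ Fv n m w S x := by
    intro x hcard hx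
    refine ⟨x, hx, rfl, fun i j hi hj => ?_, le_refl _⟩
    exact Finset.card_le_one.mp hcard i (mem_filter.mpr ⟨mem_univ _, hi⟩)
      j (mem_filter.mpr ⟨mem_univ _, hj⟩)
  intro N
  induction N with
  | zero => exact fun x hcard hx => base x (le_trans hcard (by norm_num)) hx
  | succ N ih =>
    intro x hcard hx
    by_cases h1 : (univ.filter fun k => ¬(x k = 0 ∨ x k = 1)).card ≤ 1
    · exact base x h1 hx
    obtain ⟨i, hi, j, hj, hij⟩ := Finset.one_lt_card.mp (lt_of_not_ge h1)
    have hi2 := (mem_filter.mp hi).2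
    have hj2 := (mem_filter.mp hj).2
    push_neg at hi2 hj2
    have hxi0 : 0 < x i := (hx i).1.lt_of_ne (Ne.symm hi2.1)
    have hxi1 : x i < 1 := (hx i).2.lt_of_ne hi2.2
    have hxj0 : 0 < x j := (hx j).1.lt_of_ne (Ne.symm hj2.1)
    have hxj1 : x j < 1 := (hx j).2.lt_of_ne hj2.2
    obtain ⟨β, γ, hγ, hquad⟩ := F_quad n m w hw S hij (hc j).le (hc i).le x (fun k => (hx k).2)
    set y : ℝ → Fin m → ℝ :=
      fun t k => if k = i then x i + c j * t else if k = j then x j - c i * t else x k with hy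
    have hyi : ∀ t, y t i = x i + c j * t := fun t => by simp [hy]
    have hyj : ∀ t, y t j = x j - c i * t := fun t => by simp [hy, hij, Ne.symm hij]
    have hyk : ∀ t k, k ≠ i → k ≠ j → y t k = x k := fun t k hki hkj => by simp [hy, hki, hkj]
    -- budget is preserved along the line
    have hbudget : ∀ t, ∑ k, c k * y t k = ∑ k, c k * x k := by
      intro t
      have hju : j ∈ (univ : Finset (Fin m)).erase i :=
        Finset.mem_erase.mpr ⟨Ne.symm hij, mem_univ j⟩
      rw [← Finset.add_sum_erase _ (fun k => c k * y t k) (mem_univ i),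
        ← Finset.add_sum_erase _ (fun k => c k * y t k) hju,
        ← Finset.add_sum_erase _ (fun k => c k * x k) (mem_univ i),
        ← Finset.add_sum_erase _ (fun k => c k * x k) hju]
      have htail : ∑ k ∈ ((univ : Finset (Fin m)).erase i).erase j, c k * y t k
          = ∑ k ∈ ((univ : Finset (Fin m)).erase i).erase j, c k * x k := by
        refine Finset.sum_congr rfl fun k hk => ?_
        have hk' := Finset.mem_erase.mp hk
        have hk'' := Finset.mem_erase.mp hk'.2
        rw [hyk t k hk''.1 hk'.1]
      rw [htail, hyi t, hyj t]; ring
    -- there is a good endpoint t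
    have key : ∃ t : ℝ, (∀ k, 0 ≤ y t k ∧ y t k ≤ 1) ∧
        ((y t i = 0 ∨ y t i = 1) ∨ (y t j = 0 ∨ y t j = 1)) ∧ 0 ≤ β * t + γ * t ^ 2 := by
      rcases le_or_gt 0 β with hβ | hβ
      · -- move in positive direction
        set tp : ℝ := min ((1 - x i) / c j) (x j / c i) with htp
        have htp0 : 0 ≤ tp :=
          le_min (div_nonneg (by linarith) (hc j).le) (div_nonneg (hx j).1 (hc i).le)
        have h1i : c j * tp ≤ 1 - x i := by
          calc c j * tp ≤ c j * ((1 - x i) / c j) :=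
                mul_le_mul_of_nonneg_left (min_le_left _ _) (hc j).le
            _ = 1 - x i := by field_simp [(hc i).ne', (hc j).ne']
        have h2j : c i * tp ≤ x j := by
          calc c i * tp ≤ c i * (x j / c i) :=
                mul_le_mul_of_nonneg_left (min_le_right _ _) (hc i).le
            _ = x j := by field_simp [(hc i).ne', (hc j).ne']
        refine ⟨tp, fun k => ?_, ?_, ?_⟩
        · by_cases hki : k = i
          · subst hki
            rw [hyi]
            constructor
            · have := mul_nonneg (hc j).le htp0; linarith
            · linarith
          by_cases hkj : k = j
          · subst hkj
            rw [hyj]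
            constructor
            · linarith
            · have := mul_nonneg (hc i).le htp0; linarith
          · rw [hyk tp k hki hkj]; exact hx k
        · rcases le_total ((1 - x i) / c j) (x j / c i) with h | h
          · left; right
            rw [hyi, htp, min_eq_left h]
            field_simp [(hc i).ne', (hc j).ne']
            ring
          · right; left
            rw [hyj, htp, min_eq_right h]
            field_simp [(hc i).ne', (hc j).ne']
            ring
        · have := mul_nonneg hγ (sq_nonneg tp)
          have := mul_nonneg hβ htp0
          nlinarith
      · -- move in negative direction
        set tm : ℝ := min (x i / c j) ((1 - x j) / c i) with htm
        have htm0 : 0 ≤ tm :=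
          le_min (div_nonneg (hx i).1 (hc j).le) (div_nonneg (by linarith) (hc i).le)
        have h1i : c j * tm ≤ x i := by
          calc c j * tm ≤ c j * (x i / c j) :=
                mul_le_mul_of_nonneg_left (min_le_left _ _) (hc j).le
            _ = x i := by field_simp [(hc i).ne', (hc j).ne']
        have h2j : c i * tm ≤ 1 - x j := by
          calc c i * tm ≤ c i * ((1 - x j) / c i) :=
                mul_le_mul_of_nonneg_left (min_le_right _ _) (hc i).le
            _ = 1 - x j := by field_simp [(hc i).ne', (hc j).ne']
        refine ⟨-tm, fun k => ?_, ?_, ?_⟩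
        · by_cases hki : k = i
          · subst hki
            rw [hyi]
            constructor
            · have : c j * (-tm) = -(c j * tm) := by ring
              rw [this]; linarith
            · have := mul_nonneg (hc j).le htm0
              have : c j * (-tm) = -(c j * tm) := by ring
              rw [this]; linarith [mul_nonneg (hc j).le htm0]
          by_cases hkj : k = j
          · subst hkj
            rw [hyj]
            constructor
            · have : c i * (-tm) = -(c i * tm) := by ring
              rw [this]; linarith [mul_nonneg (hc i).le htm0]
            · have : c i * (-tm) = -(c i * tm) := by ring
              rw [this]; linarith
          · rw [hyk (-tm) k hki hkj]; exact hx k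
        · rcases le_total (x i / c j) ((1 - x j) / c i) with h | h
          · left; left
            rw [hyi, htm, min_eq_left h]
            field_simp [(hc i).ne', (hc j).ne']
            ring
          · right; right
            rw [hyj, htm, min_eq_right h]
            field_simp [(hc i).ne', (hc j).ne']
            ring
        · have h2 := mul_nonneg hγ (sq_nonneg (-tm))
          have h3 : 0 ≤ β * (-tm) := by nlinarith
          nlinarith
    obtain ⟨t, hbnd, hend, hF⟩ := key
    -- the integral coordinate
    have hdec : (univ.filter fun k => ¬(y t k = 0 ∨ y t k = 1)).card ≤ N := by
      obtain ⟨k₀, hk₀mem, hk₀int⟩ :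
          ∃ k₀, k₀ ∈ (univ.filter fun k => ¬(x k = 0 ∨ x k = 1)) ∧ (y t k₀ = 0 ∨ y t k₀ = 1) := by
        rcases hend with h | h
        · exact ⟨i, hi, h⟩
        · exact ⟨j, hj, h⟩
      have hsub : (univ.filter fun k => ¬(y t k = 0 ∨ y t k = 1)) ⊆
          (univ.filter fun k => ¬(x k = 0 ∨ x k = 1)).erase k₀ := by
        intro k hk
        have hk2 := (mem_filter.mp hk).2
        refine Finset.mem_erase.mpr ⟨fun h => hk2 (h ▸ hk₀int), ?_⟩
        refine mem_filter.mpr ⟨mem_univ _, ?_⟩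
        by_cases hki : k = i
        · exact hki ▸ (mem_filter.mp hi).2
        by_cases hkj : k = j
        · exact hkj ▸ (mem_filter.mp hj).2
        · rw [← hyk t k hki hkj]; exact hk2
      have h3 := Finset.card_le_card hsub
      rw [Finset.card_erase_of_mem hk₀mem] at h3
      omega
    obtain ⟨x', hb', hs', ho', hF'⟩ := ih (y t) hdec hbnd
    refine ⟨x', hb', by rw [hs', hbudget t], ho', ?_⟩
    have := hquad t
    calc Fv n m w S x' ≥ Fv n m w S (y t) := hF'
      _ = Fv n m w S x + β * t + γ * t ^ 2 := this
      _ ≥ Fv n m w S x := by linarith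

/-- For every budget-feasible `x ∈ [0,1]^m` there is a budget-feasible
`x' ∈ [0,1]^m` with at most one non-integral coordinate and `F(x') ≥ F(x)`. -/
theorem pipage_rounding (n m : ℕ) (w : Fin n → ℝ) (hw : ∀ j, 0 ≤ w j)
    (S : Fin m → Finset (Fin n)) (c : Fin m → ℝ) (hc : ∀ i, 0 < c i)
    (B : ℝ) (hB : 0 < B)
    (x : Fin m → ℝ) (hx : ∀ i, 0 ≤ x i ∧ x i ≤ 1) (hbud : ∑ i, c i * x i ≤ B) :
    ∃ x' : Fin m → ℝ, (∀ i, 0 ≤ x' i ∧ x' i ≤ 1) ∧ (∑ i, c i * x' i ≤ B) ∧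
      (∀ i j : Fin m, ¬(x' i = 0 ∨ x' i = 1) → ¬(x' j = 0 ∨ x' j = 1) → i = j) ∧
      ∑ j, w j * (1 - ∏ i ∈ univ.filter (fun i => j ∈ S i), (1 - x' i)) ≥
        ∑ j, w j * (1 - ∏ i ∈ univ.filter (fun i => j ∈ S i), (1 - x i)) := by
  obtain ⟨x', h1, h2, h3, h4⟩ := pipage_aux n m w hw S c hc
    (univ.filter fun k => ¬(x k = 0 ∨ x k = 1)).card x le_rfl hx
  exact ⟨x', h1, h2 ▸ hbud, h3, h4⟩
end

section
/- Suppose 0 ≤ c_i ≤ B for all i ∈ [m]. If x ∈ [0,1]^m satisfies Σ_{i∈[m]} c_i x_i ≤ B and has at most one non-integral coordinate, then F(x) ≤ 2·OPT, where OPT is the integral optimum of the Budgeted Max Weighted Coverage instance. -/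
open Finset

/-- If `0 ≤ c_i ≤ B` for all `i` and `x ∈ [0,1]^m` is budget feasible with
at most one non-integral coordinate, then `F(x) ≤ 2 · OPT`, where `OPT` is the integral
optimum of the Budgeted Max Weighted Coverage instance. -/
theorem almost_integral_bound (n m : ℕ) (w : Fin n → ℝ) (hw : ∀ j, 0 ≤ w j)
    (S : Fin m → Finset (Fin n)) (c : Fin m → ℝ) (B : ℝ) (hB : 0 < B)
    (hc : ∀ i, 0 ≤ c i) (hcB : ∀ i, c i ≤ B)
    (x : Fin m → ℝ) (hx : ∀ i, 0 ≤ x i ∧ x i ≤ 1) (hbud : ∑ i, c i * x i ≤ B)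
    (hfrac : ∀ i j : Fin m, ¬(x i = 0 ∨ x i = 1) → ¬(x j = 0 ∨ x j = 1) → i = j)
    (OPT : ℝ)
    (hOPT : IsGreatest {val : ℝ | ∃ (y : Fin m → ℝ) (z : Fin n → ℝ),
        (∀ i, y i = 0 ∨ y i = 1) ∧ (∀ j, z j = 0 ∨ z j = 1) ∧
        (∀ j, z j ≤ ∑ i ∈ univ.filter (fun i => j ∈ S i), y i) ∧
        (∑ i, c i * y i) ≤ B ∧ val = ∑ j, w j * z j} OPT) :
    ∑ j, w j * (1 - ∏ i ∈ univ.filter (fun i => j ∈ S i), (1 - x i)) ≤ 2 * OPT := by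
  classical
  obtain ⟨-, hub⟩ := hOPT
  have key : ∀ (y : Fin m → ℝ) (z : Fin n → ℝ),
      (∀ i, y i = 0 ∨ y i = 1) → (∀ j, z j = 0 ∨ z j = 1) →
      (∀ j, z j ≤ ∑ i ∈ univ.filter (fun i => j ∈ S i), y i) →
      (∑ i, c i * y i) ≤ B → ∑ j, w j * z j ≤ OPT := fun y z h1 h2 h3 h4 =>
    hub ⟨y, z, h1, h2, h3, h4, rfl⟩
  have hOPT0 : (0:ℝ) ≤ OPT := by
    have := key (fun _ => 0) (fun _ => 0) (fun _ => Or.inl rfl) (fun _ => Or.inl rfl)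
      (fun j => by positivity) (by simp [hB.le])
    simpa using this
  have hprod_nonneg : ∀ j : Fin n,
      0 ≤ ∏ i ∈ univ.filter (fun i => j ∈ S i), (1 - x i) := fun j =>
    Finset.prod_nonneg (fun i _ => by linarith [(hx i).2])
  by_cases hex : ∃ i₀, ¬(x i₀ = 0 ∨ x i₀ = 1)
  · obtain ⟨i₀, hi₀⟩ := hex
    have sol1 : ∑ j, w j * (if ∃ i, j ∈ S i ∧ x i = 1 then (1:ℝ) else 0) ≤ OPT := by
      apply key (fun i => if x i = 1 then (1:ℝ) else 0)
        (fun j => if ∃ i, j ∈ S i ∧ x i = 1 then (1:ℝ) else 0)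
      · intro i; split <;> simp
      · intro j; split <;> simp
      · intro j
        split
        · rename_i h
          obtain ⟨i, hij, hxi⟩ := h
          have hmem : i ∈ univ.filter (fun i => j ∈ S i) := by simp [hij]
          have hle : (if x i = 1 then (1:ℝ) else 0)
              ≤ ∑ k ∈ univ.filter (fun i => j ∈ S i), (if x k = 1 then (1:ℝ) else 0) :=
            Finset.single_le_sum (f := fun k => if x k = 1 then (1:ℝ) else 0)
              (fun k _ => by split <;> norm_num) hmem
          rwa [if_pos hxi] at hle
        · exact Finset.sum_nonneg fun k _ => by split <;> norm_num
      · refine le_trans (Finset.sum_le_sum fun i _ => ?_) hbud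
        split
        · rename_i h; rw [h]
        · simpa using mul_nonneg (hc i) (hx i).1
    have sol2 : ∑ j, w j * (if j ∈ S i₀ then (1:ℝ) else 0) ≤ OPT := by
      apply key (fun i => if i = i₀ then (1:ℝ) else 0)
        (fun j => if j ∈ S i₀ then (1:ℝ) else 0)
      · intro i; split <;> simp
      · intro j; split <;> simp
      · intro j
        split
        · rename_i h
          have hmem : i₀ ∈ univ.filter (fun i => j ∈ S i) := by simp [h]
          have hle : (if i₀ = i₀ then (1:ℝ) else 0)
              ≤ ∑ k ∈ univ.filter (fun i => j ∈ S i), (if k = i₀ then (1:ℝ) else 0) :=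
            Finset.single_le_sum (f := fun k => if k = i₀ then (1:ℝ) else 0)
              (fun k _ => by split <;> norm_num) hmem
          rwa [if_pos rfl] at hle
        · exact Finset.sum_nonneg fun k _ => by split <;> norm_num
      · have heq : ∑ i, c i * (if i = i₀ then (1:ℝ) else 0) = c i₀ := by
          simp [mul_ite]
        rw [heq]; exact hcB i₀
    have pointwise : ∀ j : Fin n,
        w j * (1 - ∏ i ∈ univ.filter (fun i => j ∈ S i), (1 - x i))
        ≤ w j * ((if ∃ i, j ∈ S i ∧ x i = 1 then (1:ℝ) else 0)
            + (if j ∈ S i₀ then (1:ℝ) else 0)) := by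
      intro j
      apply mul_le_mul_of_nonneg_left _ (hw j)
      by_cases h1 : ∃ i, j ∈ S i ∧ x i = 1
      · rw [if_pos h1]
        split <;> nlinarith [hprod_nonneg j]
      · rw [if_neg h1]
        by_cases h2 : j ∈ S i₀
        · rw [if_pos h2]; nlinarith [hprod_nonneg j]
        · rw [if_neg h2]
          have hall : ∀ i ∈ univ.filter (fun i => j ∈ S i), (1 - x i) = 1 := by
            intro i hi
            simp only [mem_filter, mem_univ, true_and] at hi
            have hne : i ≠ i₀ := fun heq => h2 (heq ▸ hi)
            have hPi : x i = 0 ∨ x i = 1 := by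
              by_contra hc'
              exact hne (hfrac i i₀ hc' hi₀)
            rcases hPi with h | h
            · rw [h]; ring
            · exact absurd ⟨i, hi, h⟩ h1
          rw [Finset.prod_eq_one hall]; norm_num
    calc ∑ j, w j * (1 - ∏ i ∈ univ.filter (fun i => j ∈ S i), (1 - x i))
        ≤ ∑ j, w j * ((if ∃ i, j ∈ S i ∧ x i = 1 then (1:ℝ) else 0)
            + (if j ∈ S i₀ then (1:ℝ) else 0)) := Finset.sum_le_sum fun j _ => pointwise j
      _ = (∑ j, w j * (if ∃ i, j ∈ S i ∧ x i = 1 then (1:ℝ) else 0))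
            + ∑ j, w j * (if j ∈ S i₀ then (1:ℝ) else 0) := by
          rw [← Finset.sum_add_distrib]; congr 1; ext j; ring
      _ ≤ OPT + OPT := add_le_add sol1 sol2
      _ = 2 * OPT := by ring
  · push_neg at hex
    have hsol : ∑ j, w j * (1 - ∏ i ∈ univ.filter (fun i => j ∈ S i), (1 - x i)) ≤ OPT := by
      apply key x (fun j => 1 - ∏ i ∈ univ.filter (fun i => j ∈ S i), (1 - x i)) hex
      · intro j
        by_cases h1 : ∃ i ∈ univ.filter (fun i => j ∈ S i), x i = 1
        · obtain ⟨i, hi, hxi⟩ := h1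
          right
          rw [Finset.prod_eq_zero hi (by rw [hxi]; ring)]; ring
        · left
          push_neg at h1
          have hall : ∀ i ∈ univ.filter (fun i => j ∈ S i), (1 - x i) = 1 := by
            intro i hi
            rcases hex i with h | h
            · rw [h]; ring
            · exact absurd h (h1 i hi)
          rw [Finset.prod_eq_one hall]; ring
      · intro j
        by_cases h1 : ∃ i ∈ univ.filter (fun i => j ∈ S i), x i = 1
        · obtain ⟨i, hi, hxi⟩ := h1
          have hle : x i ≤ ∑ i ∈ univ.filter (fun i => j ∈ S i), x i :=
            Finset.single_le_sum (fun k _ => (hx k).1) hi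
          nlinarith [hprod_nonneg j]
        · push_neg at h1
          have hall : ∀ i ∈ univ.filter (fun i => j ∈ S i), (1 - x i) = 1 := by
            intro i hi
            rcases hex i with h | h
            · rw [h]; ring
            · exact absurd h (h1 i hi)
          rw [Finset.prod_eq_one hall]
          simpa using Finset.sum_nonneg fun k (_ : k ∈ univ.filter (fun i => j ∈ S i)) => (hx k).1
      · exact hbud
    linarith
end

section
/- Let G be a finite simple graph whose feasible edges (those with c_i ≤ B) are enumerated 1,...,m so that c_1/v_1 ≥ c_2/v_2 ≥ ... ≥ c_m/v_m, and let A_j = {j, j+1, ..., m}. Suppose for some j ∈ {1,...,m}: M is a maximum-value matching among the edges of A_j; v(M)·(c_j/v_j) ≤ B; and, if j > 1, every maximum-value matching M' among the edges of A_{j-1} satisfies v(M')·(c_{j-1}/v_{j-1}) > B. Then v(M) ≥ (1/2)·(OPT - v_{i*}), where OPT is the maximum value of a budget-feasible matching of feasible edges and v_{i*} = max{v_i : c_i ≤ B}. -/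
open Finset

/-- A set of (indices of) edges is a matching if the corresponding edges are pairwise
vertex-disjoint. -/
def IsMatchingIdx {V : Type} {m : ℕ} (edge : Fin m → Sym2 V) (M : Finset (Fin m)) : Prop :=
  (M : Set (Fin m)).Pairwise fun i k => ∀ a, a ∈ edge i → a ∉ edge k

/-- **Lemma on Greedy-ISK's value for Budgeted Max Weighted Matching.**
With the feasible edges `1,…,m` sorted by non-increasing cost-to-value ratio and
`A_j = {j,…,m}`, if `M` is a maximum-value matching among the edges of `A_j` with
`v(M)·(c_j/v_j) ≤ B`, and (when `j > 1`) every maximum-value matching `M'` among the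
edges of `A_{j-1}` satisfies `v(M')·(c_{j-1}/v_{j-1}) > B`, then
`v(M) ≥ (1/2)(OPT - v_{i*})`. -/
theorem greedy_isk_value_matching (V : Type) [Fintype V] [DecidableEq V]
    (m : ℕ) (edge : Fin m → Sym2 V) (hinj : Function.Injective edge)
    (hsimple : ∀ i, ¬ (edge i).IsDiag)
    (v c : Fin m → ℝ) (hv : ∀ i, 0 < v i) (hc : ∀ i, 0 ≤ c i)
    (B : ℝ) (hB : 0 < B) (hfeas : ∀ i, c i ≤ B)
    (hsort : ∀ i k : Fin m, i ≤ k → c k / v k ≤ c i / v i)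
    (j : Fin m) (M : Finset (Fin m))
    (hM : IsMatchingIdx edge M) (hMA : ∀ i ∈ M, j ≤ i)
    (hMmax : ∀ M' : Finset (Fin m), IsMatchingIdx edge M' → (∀ i ∈ M', j ≤ i) →
      ∑ i ∈ M', v i ≤ ∑ i ∈ M, v i)
    (hstop : (∑ i ∈ M, v i) * (c j / v j) ≤ B)
    (hprev : ∀ k : Fin m, (k : ℕ) + 1 = (j : ℕ) →
      ∀ M' : Finset (Fin m), IsMatchingIdx edge M' → (∀ i ∈ M', k ≤ i) →
        (∀ M'' : Finset (Fin m), IsMatchingIdx edge M'' → (∀ i ∈ M'', k ≤ i) →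
          ∑ i ∈ M'', v i ≤ ∑ i ∈ M', v i) →
        B < (∑ i ∈ M', v i) * (c k / v k))
    (OPT : ℝ)
    (hOPT : IsGreatest {t : ℝ | ∃ M' : Finset (Fin m), IsMatchingIdx edge M' ∧
      (∑ i ∈ M', c i) ≤ B ∧ t = ∑ i ∈ M', v i} OPT)
    (vstar : ℝ) (hstar : IsGreatest {t : ℝ | ∃ i : Fin m, t = v i} vstar) :
    ∑ i ∈ M, v i ≥ (1 / 2) * (OPT - vstar) := by
  classical
  obtain ⟨⟨O, hOmatch, hOcost, hOval⟩, hOub⟩ := hOPT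
  obtain ⟨⟨istar, hveq⟩, hvub⟩ := hstar
  have hvstar_pos : 0 < vstar := hveq ▸ hv istar
  have hvle : ∀ i, v i ≤ vstar := fun i => hvub ⟨i, rfl⟩
  set O1 := O.filter (fun i => ¬ j ≤ i) with hO1def
  set O2 := O.filter (fun i => j ≤ i) with hO2def
  have hsplit : ∑ i ∈ O2, v i + ∑ i ∈ O1, v i = ∑ i ∈ O, v i :=
    Finset.sum_filter_add_sum_filter_not O _ _
  have hO2match : IsMatchingIdx edge O2 :=
    hOmatch.mono (by intro x hx; exact Finset.filter_subset _ _ hx)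
  have hO2M : ∑ i ∈ O2, v i ≤ ∑ i ∈ M, v i :=
    hMmax O2 hO2match (fun i hi => (Finset.mem_filter.mp hi).2)
  by_cases hj0 : (j : ℕ) = 0
  · have hO1empty : O1 = ∅ := by
      apply Finset.filter_false_of_mem
      intro i _ h
      exact h (Fin.le_def.mpr (by omega))
    rw [hO1empty, Finset.sum_empty] at hsplit
    have hMnn : 0 ≤ ∑ i ∈ M, v i := Finset.sum_nonneg fun i _ => (hv i).le
    have : OPT ≤ ∑ i ∈ M, v i := by
      rw [hOval]; linarith
    linarith
  · -- j ≥ 1; let k = j - 1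
    have hjpos : 0 < (j : ℕ) := Nat.pos_of_ne_zero hj0
    set k : Fin m := ⟨(j : ℕ) - 1, lt_trans (by omega) j.isLt⟩ with hkdef
    have hk1 : (k : ℕ) + 1 = (j : ℕ) := by simp [hkdef]; omega
    -- existence of a max-value matching on A_k
    set S : Finset (Finset (Fin m)) :=
      Finset.univ.filter (fun s => IsMatchingIdx edge s ∧ ∀ i ∈ s, k ≤ i) with hSdef
    have hSne : S.Nonempty := ⟨∅, Finset.mem_filter.mpr ⟨Finset.mem_univ _, by simp [IsMatchingIdx], by simp⟩⟩
    obtain ⟨M', hM'S, hM'max⟩ := S.exists_max_image (fun s => ∑ i ∈ s, v i) hSne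
    obtain ⟨hM'match, hM'A⟩ := (Finset.mem_filter.mp hM'S).2
    have hM'maxall : ∀ M'' : Finset (Fin m), IsMatchingIdx edge M'' →
        (∀ i ∈ M'', k ≤ i) → ∑ i ∈ M'', v i ≤ ∑ i ∈ M', v i := by
      intro M'' h1 h2
      exact hM'max M'' (Finset.mem_filter.mpr ⟨Finset.mem_univ _, h1, h2⟩)
    have hBlt : B < (∑ i ∈ M', v i) * (c k / v k) :=
      hprev k hk1 M' hM'match hM'A hM'maxall
    have hM'nn : 0 ≤ ∑ i ∈ M', v i := Finset.sum_nonneg fun i _ => (hv i).le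
    have hrk_pos : 0 < c k / v k := by
      by_contra h
      push_neg at h
      nlinarith
    -- M' minus k is a matching on A_j
    have hMk : ∑ i ∈ M', v i ≤ ∑ i ∈ M, v i + v k := by
      have herase : IsMatchingIdx edge (M'.erase k) :=
        hM'match.mono (by intro x hx; exact Finset.erase_subset _ _ hx)
      have hAj : ∀ i ∈ M'.erase k, j ≤ i := by
        intro i hi
        have h1 := Finset.ne_of_mem_erase hi
        have h2 := hM'A i (Finset.mem_of_mem_erase hi)
        have : (k : ℕ) ≤ (i : ℕ) := h2
        have hne : (i : ℕ) ≠ (k : ℕ) := fun h => h1 (Fin.ext h)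
        show (j : ℕ) ≤ (i : ℕ)
        omega
      have h3 : ∑ i ∈ M'.erase k, v i ≤ ∑ i ∈ M, v i := hMmax _ herase hAj
      by_cases hkM : k ∈ M'
      · have := Finset.sum_erase_add M' v hkM
        linarith
      · rw [Finset.erase_eq_of_notMem hkM] at h3
        linarith [hv k]
    -- O1's value bound
    have hO1cost : ∑ i ∈ O1, c i ≤ B := by
      refine le_trans (Finset.sum_le_sum_of_subset_of_nonneg
        (Finset.filter_subset _ _) (fun i _ _ => hc i)) hOcost
    have hO1rk : (∑ i ∈ O1, v i) * (c k / v k) ≤ ∑ i ∈ O1, c i := by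
      rw [Finset.sum_mul]
      apply Finset.sum_le_sum
      intro i hi
      have hij : ¬ j ≤ i := (Finset.mem_filter.mp hi).2
      have hik : i ≤ k := by
        have : (i : ℕ) < (j : ℕ) := by
          by_contra h
          exact hij (by push_neg at h; exact h)
        show (i : ℕ) ≤ (k : ℕ); omega
      have := hsort i k hik
      have hvi := hv i
      calc v i * (c k / v k) ≤ v i * (c i / v i) := by nlinarith
        _ = c i := by field_simp
    have hO1lt : ∑ i ∈ O1, v i < ∑ i ∈ M', v i := by
      have h1 : (∑ i ∈ O1, v i) * (c k / v k) < (∑ i ∈ M', v i) * (c k / v k) := by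
        linarith
      exact lt_of_mul_lt_mul_right h1 hrk_pos.le
    have hvk := hvle k
    rw [hOval]
    linarith
end

section
/- Let F be the set of feasible edges (those with c_i ≤ B), let i* be an edge of maximum value in F with value v_{i*}, let OPT be the maximum value of a budget-feasible matching within F, let OPT' be the maximum value of a budget-feasible matching within F \ {i*}, and let v_{i'} = max{v_i : i ∈ F \ {i*}} (taken as 0 if F \ {i*} is empty). If v_G is a real number with v_G ≥ (1/2)·(OPT' - v_{i'}), then 4·max{v_{i*}, v_G} ≥ OPT. -/
open Finset

/-!
Dropping `i*` from an optimal matching leaves a candidate for `OPT'` and loses at most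
`v_{i*}`, so `OPT ≤ OPT' + v_{i*} ≤ 2 v_G + v_{i'} + v_{i*} ≤ 2 v_G + 2 v_{i*}`.
-/

theorem Finset.sum_le_sum_erase_add {ι M : Type*} [DecidableEq ι]
    [AddCommMonoid M] [PartialOrder M] [IsOrderedAddMonoid M]
    (s : Finset ι) (f : ι → M) {a : ι} (ha : 0 ≤ f a) :
    ∑ i ∈ s, f i ≤ ∑ i ∈ s.erase a, f i + f a := by
  by_cases has : a ∈ s
  · exact (sum_erase_add s f has).ge
  · rw [erase_eq_of_notMem has]
    exact le_add_of_nonneg_right ha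

section BudgetedMatching

variable {V : Type} {m : ℕ} {edge : Fin m → Sym2 V} {v c : Fin m → ℝ} {B : ℝ}
  {istar : Fin m}

theorem IsMatchingIdx.mono {M N : Finset (Fin m)}
    (hM : IsMatchingIdx edge M) (hNM : N ⊆ M) : IsMatchingIdx edge N :=
  Set.Pairwise.mono (coe_subset.2 hNM) hM

theorem opt_le_opt_erase_add (hv : 0 ≤ v istar) (hc : ∀ i, 0 ≤ c i) {OPT OPT' : ℝ}
    (hOPT : OPT ∈ {t : ℝ | ∃ M : Finset (Fin m), IsMatchingIdx edge M ∧
      (∀ i ∈ M, c i ≤ B) ∧ (∑ i ∈ M, c i) ≤ B ∧ t = ∑ i ∈ M, v i})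
    (hOPT' : OPT' ∈ upperBounds {t : ℝ | ∃ M : Finset (Fin m), IsMatchingIdx edge M ∧
      (∀ i ∈ M, c i ≤ B ∧ i ≠ istar) ∧ (∑ i ∈ M, c i) ≤ B ∧ t = ∑ i ∈ M, v i}) :
    OPT ≤ OPT' + v istar := by
  obtain ⟨M, hM, hMfeas, hMcost, rfl⟩ := hOPT
  have hErase : ∑ i ∈ M.erase istar, v i ≤ OPT' := by
    refine hOPT' ⟨M.erase istar, hM.mono (erase_subset _ _), fun i hi => ?_, ?_, rfl⟩
    · exact ⟨hMfeas i (mem_of_mem_erase hi), ne_of_mem_erase hi⟩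
    · exact (sum_le_sum_of_subset_of_nonneg (erase_subset _ _) fun i _ _ => hc i).trans hMcost
  linarith [M.sum_le_sum_erase_add v hv]

end BudgetedMatching

theorem det_isk_approximation_general (V : Type)
    (m : ℕ) (edge : Fin m → Sym2 V)
    (v c : Fin m → ℝ) (hv : ∀ i, 0 < v i) (hc : ∀ i, 0 ≤ c i)
    (B : ℝ)
    (istar : Fin m) (hmax : ∀ i, c i ≤ B → v i ≤ v istar)
    (OPT : ℝ)
    (hOPT : IsGreatest {t : ℝ | ∃ M : Finset (Fin m), IsMatchingIdx edge M ∧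
      (∀ i ∈ M, c i ≤ B) ∧ (∑ i ∈ M, c i) ≤ B ∧ t = ∑ i ∈ M, v i} OPT)
    (OPT' : ℝ)
    (hOPT' : IsGreatest {t : ℝ | ∃ M : Finset (Fin m), IsMatchingIdx edge M ∧
      (∀ i ∈ M, c i ≤ B ∧ i ≠ istar) ∧ (∑ i ∈ M, c i) ≤ B ∧ t = ∑ i ∈ M, v i} OPT')
    (vi' : ℝ)
    (hvi' : IsGreatest (insert (0 : ℝ) {t : ℝ | ∃ i : Fin m, (c i ≤ B ∧ i ≠ istar) ∧ t = v i}) vi')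
    (vG : ℝ) (hG : vG ≥ (1 / 2) * (OPT' - vi')) :
    4 * max (v istar) vG ≥ OPT := by
  have hvi' : vi' ≤ v istar := by
    rcases hvi'.1 with rfl | ⟨i, ⟨hiB, -⟩, rfl⟩
    · exact (hv istar).le
    · exact hmax i hiB
  have hOPT : OPT ≤ OPT' + v istar := opt_le_opt_erase_add (hv istar).le hc hOPT.1 hOPT'.2
  linarith [le_max_left (v istar) vG, le_max_right (v istar) vG]

/-- **Det-ISK's approximation for Budgeted Max Weighted Matching.**
Let `i*` be a feasible edge of maximum value, `OPT` the maximum value of a budget-feasible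
matching of feasible edges, `OPT'` the maximum value of a budget-feasible matching within
the feasible edges other than `i*`, and `v_{i'}` the maximum value of a feasible edge
other than `i*` (or `0` if none exists). If `v_G ≥ (1/2)(OPT' - v_{i'})`, then
`4·max{v_{i*}, v_G} ≥ OPT`. -/
theorem det_isk_approximation (V : Type) [Fintype V] [DecidableEq V]
    (m : ℕ) (edge : Fin m → Sym2 V) (hinj : Function.Injective edge)
    (hsimple : ∀ i, ¬ (edge i).IsDiag)
    (v c : Fin m → ℝ) (hv : ∀ i, 0 < v i) (hc : ∀ i, 0 ≤ c i)
    (B : ℝ) (hB : 0 < B)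
    (istar : Fin m) (histar : c istar ≤ B) (hmax : ∀ i, c i ≤ B → v i ≤ v istar)
    (OPT : ℝ)
    (hOPT : IsGreatest {t : ℝ | ∃ M : Finset (Fin m), IsMatchingIdx edge M ∧
      (∀ i ∈ M, c i ≤ B) ∧ (∑ i ∈ M, c i) ≤ B ∧ t = ∑ i ∈ M, v i} OPT)
    (OPT' : ℝ)
    (hOPT' : IsGreatest {t : ℝ | ∃ M : Finset (Fin m), IsMatchingIdx edge M ∧
      (∀ i ∈ M, c i ≤ B ∧ i ≠ istar) ∧ (∑ i ∈ M, c i) ≤ B ∧ t = ∑ i ∈ M, v i} OPT')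
    (vi' : ℝ)
    (hvi' : IsGreatest (insert (0 : ℝ) {t : ℝ | ∃ i : Fin m, (c i ≤ B ∧ i ≠ istar) ∧ t = v i}) vi')
    (vG : ℝ) (hG : vG ≥ (1 / 2) * (OPT' - vi')) :
    4 * max (v istar) vG ≥ OPT :=
  det_isk_approximation_general V m edge v c hv hc B istar hmax OPT hOPT OPT' hOPT' vi' hvi' vG hG
end

section
/- The mechanism Greedy-ISK is monotone: fix the graph G, the values v, the budget B, the deterministic maximum-matching oracle f, and the reported costs b_{-j} of all edges other than j. If edge j belongs to the output of Greedy-ISK when it reports cost b_j, and 0 ≤ b_j' < b_j, then edge j also belongs to the output of Greedy-ISK when it reports b_j'. -/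
open Finset

/-- The first edge of `A` in the greedy order: the edge with the largest ratio `b i / v i`,
ties broken by a fixed linear order on the edges (here: the larger index). -/
noncomputable def pickMax {m : ℕ} (v b : Fin m → ℝ) (A : Finset (Fin m)) (h : A.Nonempty) :
    Fin m :=
  (A.exists_max_image (fun i => (toLex (b i / v i, (i : ℕ)) : Lex (ℝ × ℕ))) h).choose

lemma pickMax_mem {m : ℕ} (v b : Fin m → ℝ) (A : Finset (Fin m)) (h : A.Nonempty) :
    pickMax v b A h ∈ A :=
  (A.exists_max_image (fun i => (toLex (b i / v i, (i : ℕ)) : Lex (ℝ × ℕ))) h).choose_spec.1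

/-- The Greedy-ISK mechanism: repeatedly compute the maximum-value matching `f A` among the
active edges `A`; if `v(f A) · (b k / v k) ≤ B`, where `k` is the active edge of largest
ratio, return `f A`; otherwise deactivate `k` and continue; return `∅` if `A` is empty. -/
noncomputable def greedyISK {m : ℕ} (v b : Fin m → ℝ) (B : ℝ)
    (f : Finset (Fin m) → Finset (Fin m)) (A : Finset (Fin m)) : Finset (Fin m) :=
  if h : A.Nonempty then
    if (∑ i ∈ f A, v i) * (b (pickMax v b A h) / v (pickMax v b A h)) ≤ B then f A
    else greedyISK v b B f (A.erase (pickMax v b A h))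
  else ∅
termination_by A.card
decreasing_by exact Finset.card_erase_lt_of_mem (pickMax_mem v b A h)

lemma pickMax_spec' {m : ℕ} (v b : Fin m → ℝ) (A : Finset (Fin m)) (h : A.Nonempty) :
    ∀ i ∈ A, (toLex (b i / v i, (i : ℕ)) : Lex (ℝ × ℕ)) ≤
      toLex (b (pickMax v b A h) / v (pickMax v b A h), ((pickMax v b A h) : ℕ)) :=
  (A.exists_max_image (fun i => (toLex (b i / v i, (i : ℕ)) : Lex (ℝ × ℕ))) h).choose_spec.2

lemma greedyISK_subset {m : ℕ} (v b : Fin m → ℝ) (B : ℝ)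
    (f : Finset (Fin m) → Finset (Fin m)) (hf : ∀ A, f A ⊆ A) (A : Finset (Fin m)) :
    greedyISK v b B f A ⊆ A := by
  rw [greedyISK]
  split_ifs with h hc
  · exact hf A
  · exact (greedyISK_subset v b B f hf _).trans (erase_subset _ _)
  · simp
termination_by A.card
decreasing_by exact Finset.card_erase_lt_of_mem (pickMax_mem v b A h)

lemma greedy_mono_aux {m : ℕ} (v : Fin m → ℝ) (hv : ∀ i, 0 < v i) (B : ℝ)
    (f : Finset (Fin m) → Finset (Fin m)) (hf : ∀ A, f A ⊆ A)
    (hfv : ∀ A, 0 ≤ ∑ i ∈ f A, v i)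
    (j : Fin m) (c c' : Fin m → ℝ) (hcc : ∀ i, i ≠ j → c' i = c i) (hj : c' j ≤ c j)
    (A : Finset (Fin m)) (hwin : j ∈ greedyISK v c B f A) :
    j ∈ greedyISK v c' B f A := by
  have hA : A.Nonempty := by
    rw [greedyISK] at hwin
    by_contra h
    rw [dif_neg h] at hwin
    exact absurd hwin (by simp)
  -- keys under c' are pointwise ≤ keys under c
  have hkey : ∀ i : Fin m, (toLex (c' i / v i, (i : ℕ)) : Lex (ℝ × ℕ)) ≤
      toLex (c i / v i, (i : ℕ)) := by
    intro i
    rcases eq_or_ne i j with rfl | hij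
    · rw [Prod.Lex.le_iff]
      rcases lt_or_eq_of_le (div_le_div_of_nonneg_right hj (hv i).le : c' i / v i ≤ c i / v i)
        with h | h
      · exact Or.inl h
      · exact Or.inr ⟨h, le_rfl⟩
    · rw [hcc i hij]
  set k := pickMax v c A hA with hk
  set k' := pickMax v c' A hA with hk'
  have hk'le : (toLex (c' k' / v k', (k' : ℕ)) : Lex (ℝ × ℕ)) ≤
      toLex (c k / v k, (k : ℕ)) :=
    (hkey k').trans (pickMax_spec' v c A hA k' (pickMax_mem v c' A hA))
  have hratio : c' k' / v k' ≤ c k / v k := by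
    rcases Prod.Lex.le_iff.1 hk'le with h | h
    · exact le_of_lt h
    · exact le_of_eq h.1
  rw [greedyISK, dif_pos hA, ← hk] at hwin
  rw [greedyISK, dif_pos hA, ← hk']
  by_cases hc : (∑ i ∈ f A, v i) * (c k / v k) ≤ B
  · rw [if_pos hc] at hwin
    rw [if_pos (le_trans (mul_le_mul_of_nonneg_left hratio (hfv A)) hc)]
    exact hwin
  · rw [if_neg hc] at hwin
    -- j survives, so j ≠ k
    have hjk : j ≠ k := by
      have := greedyISK_subset v c B f hf _ hwin
      exact ne_of_mem_erase this
    -- k is also the c'-max, since keys only dropped at j and j ≠ k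
    have hkk' : k' = k := by
      have h1 : (toLex (c' k / v k, (k : ℕ)) : Lex (ℝ × ℕ)) ≤
          toLex (c' k' / v k', (k' : ℕ)) :=
        pickMax_spec' v c' A hA k (pickMax_mem v c A hA)
      have h2 : (toLex (c' k' / v k', (k' : ℕ)) : Lex (ℝ × ℕ)) ≤
          toLex (c' k / v k, (k : ℕ)) := by
        refine hk'le.trans ?_
        rw [hcc k hjk.symm]
      have := toLex.injective (le_antisymm h2 h1)
      exact Fin.ext (congrArg Prod.snd this)
    rw [hkk', if_neg (by rw [hcc k hjk.symm]; exact hc)]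
    exact greedy_mono_aux v hv B f hf hfv j c c' hcc hj _ hwin
termination_by A.card
decreasing_by exact Finset.card_erase_lt_of_mem (pickMax_mem v c A hA)

/-- **Greedy-ISK is monotone.** Fix the graph, the values, the budget, the
deterministic maximum-matching oracle `f`, and the reported costs of all edges other
than `j`. If edge `j` is in the output of Greedy-ISK when reporting `b_j`, and
`0 ≤ b_j' < b_j`, then `j` is also in the output when reporting `b_j'`. -/
theorem greedy_isk_monotone (V : Type) [Fintype V] [DecidableEq V]
    (m : ℕ) (edge : Fin m → Sym2 V) (hinj : Function.Injective edge)
    (hsimple : ∀ i, ¬ (edge i).IsDiag)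
    (v : Fin m → ℝ) (hv : ∀ i, 0 < v i) (B : ℝ) (hB : 0 < B)
    (f : Finset (Fin m) → Finset (Fin m))
    (hf : ∀ A : Finset (Fin m), f A ⊆ A ∧ IsMatchingIdx edge (f A) ∧
      ∀ M : Finset (Fin m), M ⊆ A → IsMatchingIdx edge M →
        ∑ i ∈ M, v i ≤ ∑ i ∈ f A, v i)
    (b : Fin m → ℝ) (hb : ∀ i, 0 ≤ b i)
    (j : Fin m) (bj bj' : ℝ) (hbj' : 0 ≤ bj') (hlt : bj' < bj)
    (hwin : j ∈ greedyISK v (Function.update b j bj) B f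
      (univ.filter fun i => Function.update b j bj i ≤ B)) :
    j ∈ greedyISK v (Function.update b j bj') B f
      (univ.filter fun i => Function.update b j bj' i ≤ B) := by
  have hsub : ∀ A, f A ⊆ A := fun A => (hf A).1
  have hfv : ∀ A, 0 ≤ ∑ i ∈ f A, v i := fun A => Finset.sum_nonneg fun i _ => (hv i).le
  have hjA : j ∈ univ.filter fun i => Function.update b j bj i ≤ B :=
    greedyISK_subset _ _ _ _ hsub _ hwin
  have hbjB : bj ≤ B := by
    have := (mem_filter.1 hjA).2
    simpa using this
  have hsets : (univ.filter fun i => Function.update b j bj' i ≤ B) =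
      (univ.filter fun i => Function.update b j bj i ≤ B) := by
    apply Finset.filter_congr
    intro i _
    rcases eq_or_ne i j with rfl | hij
    · simp only [Function.update_self]
      exact iff_of_true (le_trans hlt.le hbjB) hbjB
    · rw [Function.update_of_ne hij, Function.update_of_ne hij]
  rw [hsets]
  refine greedy_mono_aux v hv B f hsub hfv j _ _ ?_ ?_ _ hwin
  · intro i hij
    rw [Function.update_of_ne hij, Function.update_of_ne hij]
  · simp [hlt.le]
end

section
/- The analysis of Det-ISK is tight: for every η > 0 there exist a finite simple graph G, edge values v_i > 0, edge costs c_i ≥ 0, a budget B > 0, and a deterministic maximum-matching oracle f, such that the value of the output of Det-ISK is less than (1/(4-η))·OPT, where OPT is the maximum value of a budget-feasible matching of feasible edges. -/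
open Finset

lemma pickMax_eq {m : ℕ} (v b : Fin m → ℝ) (A : Finset (Fin m)) (h : A.Nonempty) (e : Fin m)
    (he : e ∈ A)
    (hlt : ∀ i ∈ A, i ≠ e →
      (toLex (b i / v i, (i : ℕ)) : Lex (ℝ × ℕ)) < toLex (b e / v e, (e : ℕ))) :
    pickMax v b A h = e := by
  have spec := (A.exists_max_image
    (fun i => (toLex (b i / v i, (i : ℕ)) : Lex (ℝ × ℕ))) h).choose_spec
  by_contra hne
  exact absurd (spec.2 e he) (not_le.2 (hlt _ spec.1 hne))

set_option linter.unreachableTactic false in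
set_option linter.unusedTactic false in
set_option linter.unnecessarySeqFocus false in
lemma greedy_eval (d : ℝ) (hd : 0 < d) :
    greedyISK ![1,1,d,1,1] ![0,0,0,1/2,1/2] 1 id ({1,2,3,4} : Finset (Fin 5)) = {1,2} := by
  have h4 : ({1,2,3,4} : Finset (Fin 5)).Nonempty := by decide
  have h3 : ({1,2,3} : Finset (Fin 5)).Nonempty := by decide
  have h2 : ({1,2} : Finset (Fin 5)).Nonempty := by decide
  have p4 : pickMax ![1,1,d,1,1] ![0,0,0,1/2,1/2] ({1,2,3,4} : Finset (Fin 5)) h4 = 4 := by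
    apply pickMax_eq
    · decide
    · intro i hi hne
      fin_cases i <;> simp_all [Prod.Lex.lt_iff] <;> first | decide | norm_num
  have p3 : pickMax ![1,1,d,1,1] ![0,0,0,1/2,1/2] ({1,2,3} : Finset (Fin 5)) h3 = 3 := by
    apply pickMax_eq
    · decide
    · intro i hi hne
      fin_cases i <;> simp_all [Prod.Lex.lt_iff] <;> first | decide | norm_num
  have p2 : pickMax ![1,1,d,1,1] ![0,0,0,1/2,1/2] ({1,2} : Finset (Fin 5)) h2 = 2 := by
    apply pickMax_eq
    · decide
    · intro i hi hne
      fin_cases i <;> simp_all [Prod.Lex.lt_iff] <;> first | decide | norm_num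
  have s4 : ∑ i ∈ ({1,2,3,4} : Finset (Fin 5)), (![1,1,d,1,1] : Fin 5 → ℝ) i = 3 + d := by
    simp [Finset.sum_insert, Finset.mem_insert, Finset.mem_singleton]; ring
  have s3 : ∑ i ∈ ({1,2,3} : Finset (Fin 5)), (![1,1,d,1,1] : Fin 5 → ℝ) i = 2 + d := by
    simp [Finset.sum_insert, Finset.mem_insert, Finset.mem_singleton]; ring
  rw [greedyISK, dif_pos h4, p4]
  rw [if_neg (by simp only [id, s4]; simp; nlinarith)]
  have e4 : ({1,2,3,4} : Finset (Fin 5)).erase 4 = {1,2,3} := by decide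
  rw [e4, greedyISK, dif_pos h3, p3]
  rw [if_neg (by simp only [id, s3]; simp; nlinarith)]
  have e3 : ({1,2,3} : Finset (Fin 5)).erase 3 = {1,2} := by decide
  rw [e3, greedyISK, dif_pos h2, p2]
  rw [if_pos (by simp)]
  rfl

/-- **the analysis of Det-ISK is tight.** For every `0 < η < 4` there is an
instance of Budgeted Max Weighted Matching on which the value of the output of Det-ISK
(which returns a maximum-value feasible edge `i*` if its value is at least the value of
Greedy-ISK run on the edges without `i*`, and otherwise that greedy matching) is less than
`(1/(4-η)) · OPT`. -/
theorem det_isk_tight :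
    ∀ η : ℝ, 0 < η → η < 4 →
    ∃ (nV m : ℕ) (edge : Fin m → Sym2 (Fin nV)) (v c : Fin m → ℝ) (B : ℝ)
      (f : Finset (Fin m) → Finset (Fin m)) (istar : Fin m) (OPT : ℝ),
      Function.Injective edge ∧ (∀ i, ¬ (edge i).IsDiag) ∧
      (∀ i, 0 < v i) ∧ (∀ i, 0 ≤ c i) ∧ 0 < B ∧
      (∀ A : Finset (Fin m), f A ⊆ A ∧ IsMatchingIdx edge (f A) ∧
        ∀ M : Finset (Fin m), M ⊆ A → IsMatchingIdx edge M →
          ∑ i ∈ M, v i ≤ ∑ i ∈ f A, v i) ∧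
      c istar ≤ B ∧ (∀ i, c i ≤ B → v i ≤ v istar) ∧
      IsGreatest {t : ℝ | ∃ M : Finset (Fin m), IsMatchingIdx edge M ∧
        (∀ i ∈ M, c i ≤ B) ∧ (∑ i ∈ M, c i) ≤ B ∧ t = ∑ i ∈ M, v i} OPT ∧
      (if (∑ i ∈ greedyISK v c B f ((univ.filter fun i => c i ≤ B).erase istar), v i)
            ≤ v istar
        then v istar
        else ∑ i ∈ greedyISK v c B f ((univ.filter fun i => c i ≤ B).erase istar), v i)
        < (1 / (4 - η)) * OPT := by
  intro η hη hη4
  set d : ℝ := η / 8 with hdef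
  have hd : 0 < d := by positivity
  have hd1 : d < 1 := by rw [hdef]; linarith
  set ed : Fin 5 → Sym2 (Fin 10) :=
    ![s(0,1), s(2,3), s(4,5), s(6,7), s(8,9)] with hed
  set v : Fin 5 → ℝ := ![1,1,d,1,1] with hv
  set c : Fin 5 → ℝ := ![0,0,0,1/2,1/2] with hc
  have hvpos : ∀ i, 0 < v i := by
    intro i; fin_cases i <;> simp [hv] <;> norm_num [hd]
  have hallM : ∀ M : Finset (Fin 5), IsMatchingIdx ed M := by
    have key : ∀ (i k : Fin 5), i ≠ k → ∀ a, a ∈ ed i → a ∉ ed k := by decide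
    intro M i _ k _ hne
    exact key i k hne
  refine ⟨10, 5, ed, v, c, 1, id, 0, 4 + d, ?_, ?_, hvpos, ?_, one_pos, ?_, ?_, ?_, ?_, ?_⟩
  · decide
  · decide
  · intro i; fin_cases i <;> norm_num [hc]
  · intro A
    refine ⟨subset_rfl, hallM _, fun M hM _ => ?_⟩
    exact Finset.sum_le_sum_of_subset_of_nonneg hM (fun i _ _ => (hvpos i).le)
  · norm_num [hc]
  · intro i _
    fin_cases i <;> simp [hv] <;> norm_num [hd1.le]
  · constructor
    · refine ⟨Finset.univ, hallM _, ?_, ?_, ?_⟩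
      · intro i _; fin_cases i <;> norm_num [hc]
      · simp [hc, Fin.sum_univ_five]; norm_num
      · simp [hv, Fin.sum_univ_five]; ring
    · rintro t ⟨M, _, _, _, rfl⟩
      calc ∑ i ∈ M, v i ≤ ∑ i ∈ Finset.univ, v i :=
            Finset.sum_le_sum_of_subset_of_nonneg (Finset.subset_univ M)
              (fun i _ _ => (hvpos i).le)
        _ = 4 + d := by simp [hv, Fin.sum_univ_five]; ring_nf
  · have hA : ((univ : Finset (Fin 5)).filter fun i => c i ≤ 1).erase 0
        = ({1,2,3,4} : Finset (Fin 5)) := by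
      have : ((univ : Finset (Fin 5)).filter fun i => c i ≤ 1) = univ := by
        apply Finset.filter_true_of_mem
        intro i _
        fin_cases i <;> norm_num [hc]
      rw [this]; decide
    rw [hA, hv, hc, greedy_eval d hd]
    have hs : ∑ i ∈ ({1,2} : Finset (Fin 5)), (![1,1,d,1,1] : Fin 5 → ℝ) i = 1 + d := by
      simp [Finset.sum_insert, Finset.mem_insert, Finset.mem_singleton]; try ring
    rw [hs]
    rw [if_neg (by simp; nlinarith)]
    have h4η : (0:ℝ) < 4 - η := by linarith
    rw [one_div, inv_mul_eq_div, lt_div_iff₀ h4η]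
    rw [hdef]
    nlinarith [sq_nonneg η]
end

section
/- Let (U, I) be an independence system with element values v_i > 0, costs c_i ≥ 0, and budget B > 0, let the feasible elements (c_i ≤ B) be enumerated 1,...,m so that c_1/v_1 ≥ ... ≥ c_m/v_m, and let A_j = {j,...,m}. Let ρ ≥ 1 and suppose for some j ∈ {1,...,m}: M ∈ I with M ⊆ A_j and v(M) ≥ (1/ρ)·max{v(T) : T ∈ I, T ⊆ A_j}; v(M)·(c_j/v_j) ≤ B; and, if j > 1, there is M' ∈ I with M' ⊆ A_{j-1}, v(M') ≥ (1/ρ)·max{v(T) : T ∈ I, T ⊆ A_{j-1}}, and v(M')·(c_{j-1}/v_{j-1}) > B. Then v(M) ≥ (1/(2ρ))·(OPT - v_{i*}), where OPT = max{v(T) : T ∈ I, T ⊆ A_1, Σ_{i∈T} c_i ≤ B} and v_{i*} = max{v_i : c_i ≤ B}. -/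
open Finset

/-! Split an optimal solution `T` at `j`. The part of `T` in `A_j` is independent, so its value
is at most `ρ·v(M)`. Every element of the part before `j` has cost-to-value ratio at least
`r = c_{j-1}/v_{j-1}`; since that part fits in the budget, its value is at most `B / r < v(M')`.
Finally `M' ∖ {j-1}` is an independent subset of `A_j`, so `v(M') ≤ ρ·v(M) + v_{i*}`. -/

theorem sum_mul_le_sum_of_le_div {ι : Type*} {s : Finset ι} {v c : ι → ℝ} {r : ℝ}
    (hv : ∀ i ∈ s, 0 < v i) (hr : ∀ i ∈ s, r ≤ c i / v i) :
    (∑ i ∈ s, v i) * r ≤ ∑ i ∈ s, c i := by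
  rw [sum_mul]
  exact sum_le_sum fun i hi => by
    rw [mul_comm]
    exact (le_div_iff₀ (hv i hi)).1 (hr i hi)

theorem sum_lt_of_budget_lt_mul {ι : Type*} {s : Finset ι} {v c : ι → ℝ} {r B V : ℝ}
    (hv : ∀ i ∈ s, 0 < v i) (hr : ∀ i ∈ s, r ≤ c i / v i) (hr₀ : 0 ≤ r)
    (hs : ∑ i ∈ s, c i ≤ B) (hV : B < V * r) :
    ∑ i ∈ s, v i < V :=
  lt_of_mul_lt_mul_right (((sum_mul_le_sum_of_le_div hv hr).trans hs).trans_lt hV) hr₀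

section IndependenceSystem

variable {α : Type*} [LinearOrder α] {I : Set (Finset α)} {v c : α → ℝ}

theorem sum_le_add_of_covBy (hdown : ∀ A B : Finset α, B ∈ I → A ⊆ B → A ∈ I)
    {M' : Finset α} {k j : α} {b : ℝ} (hM'I : M' ∈ I) (hM'k : ∀ i ∈ M', k ≤ i) (hkj : k ⋖ j)
    (happrox : ∀ T ∈ I, (∀ i ∈ T, j ≤ i) → ∑ i ∈ T, v i ≤ b) (hvk : 0 ≤ v k) :
    ∑ i ∈ M', v i ≤ b + v k := by
  have herase : ∑ i ∈ M'.erase k, v i ≤ b :=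
    happrox _ (hdown _ _ hM'I (erase_subset _ _)) fun i hi =>
      hkj.ge_of_gt ((hM'k i (mem_of_mem_erase hi)).lt_of_ne (ne_of_mem_erase hi).symm)
  by_cases hk : k ∈ M'
  · rw [← sum_erase_add _ _ hk]
    linarith
  · rw [erase_eq_of_notMem hk] at herase
    linarith

theorem sum_filter_lt_lt_add_of_covBy (hdown : ∀ A B : Finset α, B ∈ I → A ⊆ B → A ∈ I)
    (hv : ∀ i, 0 < v i) (hc : ∀ i, 0 ≤ c i) (hanti : Antitone fun i => c i / v i)
    {T M' : Finset α} {k j : α} {B b : ℝ} (hTc : ∑ i ∈ T, c i ≤ B)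
    (hM'I : M' ∈ I) (hM'k : ∀ i ∈ M', k ≤ i) (hkj : k ⋖ j)
    (happrox : ∀ T ∈ I, (∀ i ∈ T, j ≤ i) → ∑ i ∈ T, v i ≤ b)
    (hover : B < (∑ i ∈ M', v i) * (c k / v k)) :
    ∑ i ∈ T.filter (· < j), v i < b + v k :=
  calc ∑ i ∈ T.filter (· < j), v i
      < ∑ i ∈ M', v i :=
        sum_lt_of_budget_lt_mul (fun i _ => hv i)
          (fun _ hi => hanti (hkj.le_of_lt (mem_filter.1 hi).2))
          (div_nonneg (hc k) (hv k).le)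
          ((sum_le_sum_of_subset_of_nonneg (filter_subset _ _) fun i _ _ => hc i).trans hTc)
          hover
    _ ≤ b + v k := sum_le_add_of_covBy hdown hM'I hM'k hkj happrox (hv k).le

end IndependenceSystem

theorem greedy_isk_value_independence_system_general (m : ℕ) (I : Set (Finset (Fin m)))
    (hI₂ : ∀ A B : Finset (Fin m), B ∈ I → A ⊆ B → A ∈ I)
    (v c : Fin m → ℝ) (hv : ∀ i, 0 < v i) (hc : ∀ i, 0 ≤ c i)
    (B : ℝ)
    (hsort : ∀ i k : Fin m, i ≤ k → c k / v k ≤ c i / v i)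
    (ρ : ℝ) (hρ : 1 ≤ ρ)
    (j : Fin m) (M : Finset (Fin m))
    (hMapx : ∀ T ∈ I, (∀ i ∈ T, j ≤ i) → ∑ i ∈ T, v i ≤ ρ * ∑ i ∈ M, v i)
    (hprev : ∀ k : Fin m, (k : ℕ) + 1 = (j : ℕ) →
      ∃ M' ∈ I, (∀ i ∈ M', k ≤ i) ∧
        (∀ T ∈ I, (∀ i ∈ T, k ≤ i) → ∑ i ∈ T, v i ≤ ρ * ∑ i ∈ M', v i) ∧
        B < (∑ i ∈ M', v i) * (c k / v k))
    (OPT : ℝ)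
    (hOPT : IsGreatest {t : ℝ | ∃ T ∈ I, (∑ i ∈ T, c i) ≤ B ∧ t = ∑ i ∈ T, v i} OPT)
    (vstar : ℝ) (hstar : IsGreatest {t : ℝ | ∃ i : Fin m, t = v i} vstar) :
    ∑ i ∈ M, v i ≥ (1 / (2 * ρ)) * (OPT - vstar) := by
  obtain ⟨T, hTI, hTc, rfl⟩ := hOPT.1
  obtain ⟨i₀, rfl⟩ := hstar.1
  have hρM : 0 ≤ ρ * ∑ i ∈ M, v i :=
    mul_nonneg (by linarith) (sum_nonneg fun i _ => (hv i).le)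
  have hupper : ∑ i ∈ T.filter (j ≤ ·), v i ≤ ρ * ∑ i ∈ M, v i :=
    hMapx _ (hI₂ _ _ hTI (filter_subset _ _)) fun i hi => (mem_filter.1 hi).2
  have hlower : ∑ i ∈ T.filter (· < j), v i ≤ ρ * ∑ i ∈ M, v i + v i₀ := by
    rcases Nat.eq_zero_or_pos j with hj | hj
    · have hempty : T.filter (· < j) = ∅ :=
        filter_eq_empty_iff.2 fun i _ => by simp [Fin.lt_def, hj]
      rw [hempty, sum_empty]
      linarith [hv i₀]
    · set k : Fin m := ⟨j - 1, by omega⟩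
      obtain ⟨M', hM'I, hM'k, -, hover⟩ := hprev k (by simp only [k]; omega)
      have hkj : k ⋖ j :=
        ⟨Fin.lt_def.2 (by simp only [k]; omega), fun i hki hij => by
          rw [Fin.lt_def] at hki hij; simp only [k] at hki; omega⟩
      linarith [sum_filter_lt_lt_add_of_covBy hI₂ hv hc hsort hTc hM'I hM'k hkj hMapx hover,
        hstar.2 ⟨k, rfl⟩]
  have hsplit := sum_filter_add_sum_filter_not T (j ≤ ·) v
  simp only [not_le] at hsplit
  rw [ge_iff_le, one_div, inv_mul_le_iff₀ (by linarith)]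
  linarith

/-- **Greedy-ISK's value for Independence System Knapsack, with a
`ρ`-approximate oracle.** With the feasible elements `1,…,m` sorted by non-increasing
cost-to-value ratio and `A_j = {j,…,m}`, suppose `M ∈ I` with `M ⊆ A_j` is a
`ρ`-approximately maximum-value independent set in `A_j` with `v(M)·(c_j/v_j) ≤ B`, and
(when `j > 1`) some `ρ`-approximately maximum-value independent set `M' ∈ I` in `A_{j-1}`
satisfies `v(M')·(c_{j-1}/v_{j-1}) > B`. Then `v(M) ≥ (1/(2ρ))(OPT - v_{i*})`. -/
theorem greedy_isk_value_independence_system (m : ℕ) (I : Set (Finset (Fin m)))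
    (hI₁ : ∅ ∈ I) (hI₂ : ∀ A B : Finset (Fin m), B ∈ I → A ⊆ B → A ∈ I)
    (v c : Fin m → ℝ) (hv : ∀ i, 0 < v i) (hc : ∀ i, 0 ≤ c i)
    (B : ℝ) (hB : 0 < B) (hfeas : ∀ i, c i ≤ B)
    (hsingle : ∀ i : Fin m, ({i} : Finset (Fin m)) ∈ I)
    (hsort : ∀ i k : Fin m, i ≤ k → c k / v k ≤ c i / v i)
    (ρ : ℝ) (hρ : 1 ≤ ρ)
    (j : Fin m) (M : Finset (Fin m)) (hMI : M ∈ I) (hMA : ∀ i ∈ M, j ≤ i)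
    (hMapx : ∀ T ∈ I, (∀ i ∈ T, j ≤ i) → ∑ i ∈ T, v i ≤ ρ * ∑ i ∈ M, v i)
    (hstop : (∑ i ∈ M, v i) * (c j / v j) ≤ B)
    (hprev : ∀ k : Fin m, (k : ℕ) + 1 = (j : ℕ) →
      ∃ M' ∈ I, (∀ i ∈ M', k ≤ i) ∧
        (∀ T ∈ I, (∀ i ∈ T, k ≤ i) → ∑ i ∈ T, v i ≤ ρ * ∑ i ∈ M', v i) ∧
        B < (∑ i ∈ M', v i) * (c k / v k))
    (OPT : ℝ)
    (hOPT : IsGreatest {t : ℝ | ∃ T ∈ I, (∑ i ∈ T, c i) ≤ B ∧ t = ∑ i ∈ T, v i} OPT)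
    (vstar : ℝ) (hstar : IsGreatest {t : ℝ | ∃ i : Fin m, t = v i} vstar) :
    ∑ i ∈ M, v i ≥ (1 / (2 * ρ)) * (OPT - vstar) :=
  greedy_isk_value_independence_system_general m I hI₂ v c hv hc B hsort ρ hρ j M hMapx hprev OPT
    hOPT vstar hstar
end

section
/- Let (U, I) be an independence system with element values v_i > 0, costs c_i ≥ 0, and budget B > 0, let F = {i : c_i ≤ B}, let i* ∈ F have maximum value v_{i*}, let OPT = max{v(T) : T ∈ I, T ⊆ F, Σ_{i∈T} c_i ≤ B}, OPT' = max{v(T) : T ∈ I, T ⊆ F \ {i*}, Σ_{i∈T} c_i ≤ B}, and v_{i'} = max{v_i : i ∈ F \ {i*}} (taken as 0 if F \ {i*} is empty). If ρ ≥ 1 and v_G is a real number with v_G ≥ (1/(2ρ))·(OPT' - v_{i'}), then (2ρ + 2)·max{v_{i*}, v_G} ≥ OPT. -/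
open Finset

theorem sum_le_opt_erase_add {U : Type} [DecidableEq U] {I : Set (Finset U)} {v c : U → ℝ}
    {B : ℝ} (hI : ∀ A B : Finset U, B ∈ I → A ⊆ B → A ∈ I)
    (hc : ∀ i, 0 ≤ c i) {a : U} (hva : 0 ≤ v a) {T : Finset U} (hTI : T ∈ I)
    (hTc : ∀ i ∈ T, c i ≤ B) (hTB : ∑ i ∈ T, c i ≤ B) {OPT' : ℝ}
    (hOPT' : OPT' ∈ upperBounds {t : ℝ | ∃ T ∈ I, (∀ i ∈ T, c i ≤ B ∧ i ≠ a) ∧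
      (∑ i ∈ T, c i) ≤ B ∧ t = ∑ i ∈ T, v i}) :
    ∑ i ∈ T, v i ≤ OPT' + v a := by
  have herase_feasible : ∑ i ∈ T.erase a, v i ≤ OPT' := by
    refine hOPT' ⟨T.erase a, hI _ _ hTI (erase_subset a T), fun i hi => ?_, ?_, rfl⟩
    · exact ⟨hTc i (mem_of_mem_erase hi), ne_of_mem_erase hi⟩
    · exact (sum_le_sum_of_subset_of_nonneg (erase_subset a T) fun i _ _ => hc i).trans hTB
  linarith [T.sum_le_sum_erase_add v hva]

theorem le_mul_max_of_le_add {OPT OPT' x vi' vG ρ : ℝ} (hρ : 0 < ρ)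
    (hOPT : OPT ≤ OPT' + x) (hvi' : vi' ≤ x) (hG : 1 / (2 * ρ) * (OPT' - vi') ≤ vG) :
    OPT ≤ (2 * ρ + 2) * max x vG := by
  have hG' : OPT' - vi' ≤ 2 * ρ * vG := by
    rwa [one_div, inv_mul_le_iff₀ (by positivity)] at hG
  calc OPT ≤ 2 * ρ * vG + 2 * x := by linarith
    _ ≤ 2 * ρ * max x vG + 2 * max x vG := by gcongr <;> simp
    _ = (2 * ρ + 2) * max x vG := by ring

theorem det_isk_approximation_independence_system_general (U : Type) [DecidableEq U]
    (I : Set (Finset U))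
    (hI₂ : ∀ A B : Finset U, B ∈ I → A ⊆ B → A ∈ I)
    (v c : U → ℝ) (hv : ∀ i, 0 < v i) (hc : ∀ i, 0 ≤ c i) (B : ℝ)
    (istar : U) (hmax : ∀ i, c i ≤ B → v i ≤ v istar)
    (OPT : ℝ)
    (hOPT : IsGreatest {t : ℝ | ∃ T ∈ I, (∀ i ∈ T, c i ≤ B) ∧
      (∑ i ∈ T, c i) ≤ B ∧ t = ∑ i ∈ T, v i} OPT)
    (OPT' : ℝ)
    (hOPT' : IsGreatest {t : ℝ | ∃ T ∈ I, (∀ i ∈ T, c i ≤ B ∧ i ≠ istar) ∧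
      (∑ i ∈ T, c i) ≤ B ∧ t = ∑ i ∈ T, v i} OPT')
    (vi' : ℝ)
    (hvi' : IsGreatest (insert (0 : ℝ) {t : ℝ | ∃ i : U, (c i ≤ B ∧ i ≠ istar) ∧ t = v i}) vi')
    (ρ : ℝ) (hρ : 1 ≤ ρ)
    (vG : ℝ) (hG : vG ≥ (1 / (2 * ρ)) * (OPT' - vi')) :
    (2 * ρ + 2) * max (v istar) vG ≥ OPT := by
  obtain ⟨T, hTI, hTc, hTB, rfl⟩ := hOPT.1
  have hvstar : 0 ≤ v istar := (hv istar).le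
  have hOPT_le : ∑ i ∈ T, v i ≤ OPT' + v istar :=
    sum_le_opt_erase_add hI₂ hc hvstar hTI hTc hTB hOPT'.2
  have hvi'_le : vi' ≤ v istar := by
    rcases hvi'.1 with h | ⟨i, ⟨hiB, -⟩, rfl⟩
    · exact h ▸ hvstar
    · exact hmax i hiB
  exact le_mul_max_of_le_add (by linarith) hOPT_le hvi'_le hG

/-- **Det-ISK's approximation for Independence System Knapsack.**
Let `F` be the set of feasible elements, `i* ∈ F` of maximum value, `OPT` (resp. `OPT'`)
the maximum value of a budget-feasible independent set inside `F` (resp. `F \ {i*}`), and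
`v_{i'}` the maximum value of an element of `F \ {i*}` (or `0` if none exists). If
`ρ ≥ 1` and `v_G ≥ (1/(2ρ))(OPT' - v_{i'})`, then `(2ρ + 2)·max{v_{i*}, v_G} ≥ OPT`. -/
theorem det_isk_approximation_independence_system (U : Type) [Fintype U] [DecidableEq U]
    (I : Set (Finset U)) (hI₁ : ∅ ∈ I)
    (hI₂ : ∀ A B : Finset U, B ∈ I → A ⊆ B → A ∈ I)
    (v c : U → ℝ) (hv : ∀ i, 0 < v i) (hc : ∀ i, 0 ≤ c i) (B : ℝ) (hB : 0 < B)
    (hsingle : ∀ i : U, c i ≤ B → ({i} : Finset U) ∈ I)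
    (istar : U) (histar : c istar ≤ B) (hmax : ∀ i, c i ≤ B → v i ≤ v istar)
    (OPT : ℝ)
    (hOPT : IsGreatest {t : ℝ | ∃ T ∈ I, (∀ i ∈ T, c i ≤ B) ∧
      (∑ i ∈ T, c i) ≤ B ∧ t = ∑ i ∈ T, v i} OPT)
    (OPT' : ℝ)
    (hOPT' : IsGreatest {t : ℝ | ∃ T ∈ I, (∀ i ∈ T, c i ≤ B ∧ i ≠ istar) ∧
      (∑ i ∈ T, c i) ≤ B ∧ t = ∑ i ∈ T, v i} OPT')
    (vi' : ℝ)
    (hvi' : IsGreatest (insert (0 : ℝ) {t : ℝ | ∃ i : U, (c i ≤ B ∧ i ≠ istar) ∧ t = v i}) vi')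
    (ρ : ℝ) (hρ : 1 ≤ ρ)
    (vG : ℝ) (hG : vG ≥ (1 / (2 * ρ)) * (OPT' - vi')) :
    (2 * ρ + 2) * max (v istar) vG ≥ OPT :=
  det_isk_approximation_independence_system_general U I hI₂ v c hv hc B istar hmax OPT hOPT OPT'
    hOPT' vi' hvi' ρ hρ vG hG
end

section
/- Let v be a nondecreasing submodular set function on a finite set A with v(∅) = 0, let each i ∈ A have cost 0 ≤ c_i ≤ B with budget B > 0, let OPT(S) = max{v(T) : T ⊆ S, Σ_{i∈T} c_i ≤ B}, and let i* ∈ A maximize v({i}). Fix ρ ≥ 1, let γ = sqrt(1 + 4(ρ-1)e + 4(ρ² + 4ρ + 1)e²), α = (1 + 2(ρ+1)e + γ)/(2(e-1)), and R = (2(ρ+2)e - 1 + γ)/(2(e-1)). Then: (i) if α·v({i*}) ≥ OPT(A \ {i*}), then OPT(A) ≤ R·v({i*}); and (ii) if α·v({i*}) < ρ·OPT(A) and S ⊆ A satisfies v(S) ≥ ((e-1)/(3e))·OPT(A) - (2/3)·v({i*}), then OPT(A) ≤ R·v(S). -/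
open Finset

/-- **analysis of Mechanism-SM-frac.** Let `v` be a nondecreasing submodular
set function on a finite set `A` with `v ∅ = 0`, costs `0 ≤ c_i ≤ B`, budget `B > 0`,
`OPT(S) = max {v(T) : T ⊆ S, Σ_{i∈T} c_i ≤ B}`, and `i*` maximizing `v({i})`. Fix `ρ ≥ 1`,
`γ = sqrt(1 + 4(ρ-1)e + 4(ρ²+4ρ+1)e²)`, `α = (1 + 2(ρ+1)e + γ)/(2(e-1))`, and
`R = (2(ρ+2)e - 1 + γ)/(2(e-1))`. Then:
(i) if `α·v({i*}) ≥ OPT(A \ {i*})`, then `OPT(A) ≤ R·v({i*})`; and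
(ii) if `α·v({i*}) < ρ·OPT(A)` and `v(S) ≥ ((e-1)/(3e))·OPT(A) - (2/3)·v({i*})`,
then `OPT(A) ≤ R·v(S)`. -/
theorem mechanism_sm_frac_analysis (A : Type) [Fintype A] [DecidableEq A]
    (v : Finset A → ℝ)
    (hmono : ∀ S T : Finset A, S ⊆ T → v S ≤ v T)
    (hzero : v ∅ = 0)
    (hsub : ∀ (S T : Finset A) (i : A), S ⊆ T → i ∉ T →
      v (insert i T) - v T ≤ v (insert i S) - v S)
    (c : A → ℝ) (B : ℝ) (hB : 0 < B) (hc : ∀ i, 0 ≤ c i) (hcB : ∀ i, c i ≤ B)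
    (OPT : Finset A → ℝ)
    (hOPT : ∀ S : Finset A,
      IsGreatest {t : ℝ | ∃ T ⊆ S, (∑ i ∈ T, c i) ≤ B ∧ t = v T} (OPT S))
    (istar : A) (histar : ∀ i : A, v {i} ≤ v {istar})
    (ρ : ℝ) (hρ : 1 ≤ ρ)
    (γ α R : ℝ)
    (hγ : γ = Real.sqrt (1 + 4 * (ρ - 1) * Real.exp 1 +
      4 * (ρ ^ 2 + 4 * ρ + 1) * Real.exp 1 ^ 2))
    (hα : α = (1 + 2 * (ρ + 1) * Real.exp 1 + γ) / (2 * (Real.exp 1 - 1)))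
    (hR : R = (2 * (ρ + 2) * Real.exp 1 - 1 + γ) / (2 * (Real.exp 1 - 1))) :
    (α * v {istar} ≥ OPT (univ.erase istar) → OPT univ ≤ R * v {istar}) ∧
    (∀ S : Finset A, α * v {istar} < ρ * OPT univ →
      v S ≥ ((Real.exp 1 - 1) / (3 * Real.exp 1)) * OPT univ - (2 / 3) * v {istar} →
      OPT univ ≤ R * v S) := by
  -- basic facts about E = exp 1
  have hE1 : (1:ℝ) < Real.exp 1 :=
    lt_trans (by norm_num) Real.exp_one_gt_d9
  have hE0 : (0:ℝ) < Real.exp 1 := lt_trans one_pos hE1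
  set E := Real.exp 1 with hEdef
  have hEne : E - 1 ≠ 0 := sub_ne_zero.mpr (ne_of_gt hE1)
  -- γ facts
  have hγ0 : 0 ≤ γ := hγ ▸ Real.sqrt_nonneg _
  have harg : 0 ≤ 1 + 4 * (ρ - 1) * E + 4 * (ρ ^ 2 + 4 * ρ + 1) * E ^ 2 := by nlinarith
  have hγ2 : γ ^ 2 = 1 + 4 * (ρ - 1) * E + 4 * (ρ ^ 2 + 4 * ρ + 1) * E ^ 2 := by
    rw [hγ]; exact Real.sq_sqrt harg
  -- α and R relations
  have hαeq : 2 * (E - 1) * α = 1 + 2 * (ρ + 1) * E + γ := by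
    rw [hα]; field_simp
  have hReq : R = α + 1 := by
    rw [hR, hα]; field_simp; ring
  have hαpos : 0 < α := by nlinarith
  -- the key quadratic inequality satisfied by α
  have hγeq : γ = 2 * (E - 1) * α - (1 + 2 * (ρ + 1) * E) := by linarith
  have hfpos : 0 ≤ (E - 1) * α ^ 2 - (2 * (ρ + 1) * E + 1) * α - 2 * E * ρ := by
    rw [hγeq] at hγ2
    nlinarith [hγ2, hE1, hρ, mul_nonneg hE0.le (sub_nonneg.mpr hρ)]
  -- nonnegativity facts
  have hι0 : 0 ≤ v {istar} := by
    have h := hmono ∅ {istar} (empty_subset _)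
    rw [hzero] at h; exact h
  have hO0 : 0 ≤ OPT univ := by
    refine (hOPT univ).2 ⟨∅, empty_subset _, ?_, hzero.symm⟩
    simp [hB.le]
  -- key structural fact: OPT(A) ≤ OPT(A \ {i*}) + v({i*})
  obtain ⟨⟨T, hTsub, hTcost, hTv⟩, hub⟩ := hOPT univ
  have hkey : OPT univ ≤ OPT (univ.erase istar) + v {istar} := by
    have h1 : v (T.erase istar) ≤ OPT (univ.erase istar) := by
      refine (hOPT _).2 ⟨T.erase istar, erase_subset_erase _ hTsub, ?_, rfl⟩
      exact le_trans (sum_le_sum_of_subset_of_nonneg (erase_subset _ _)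
        (fun i _ _ => hc i)) hTcost
    have h2 : v T ≤ v (T.erase istar) + v {istar} := by
      by_cases h : istar ∈ T
      · have hnotin : istar ∉ T.erase istar := notMem_erase _ _
        have h3 := hsub ∅ (T.erase istar) istar (empty_subset _) hnotin
        rw [insert_erase h] at h3
        have h4 : insert istar (∅ : Finset A) = {istar} := rfl
        rw [h4, hzero] at h3
        linarith
      · rw [erase_eq_of_notMem h]; linarith
    rw [hTv]; linarith
  constructor
  · -- part (i)
    intro h
    rw [hReq]
    linarith
  · -- part (ii)
    intro S hlt hS
    rw [hReq]
    have h3E : (0:ℝ) < 3 * E := by positivity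
    have hS' : (E - 1) * OPT univ - 2 * E * v {istar} ≤ 3 * E * v S := by
      have hm := mul_le_mul_of_nonneg_left hS h3E.le
      have hexp : 3 * E * ((E - 1) / (3 * E) * OPT univ - 2 / 3 * v {istar})
          = (E - 1) * OPT univ - 2 * E * v {istar} := by
        field_simp
      rw [hexp] at hm
      exact hm
    -- multiply hS' by α > 0
    have h1 : α * ((E - 1) * OPT univ - 2 * E * v {istar}) ≤ α * (3 * E * v S) :=
      mul_le_mul_of_nonneg_left hS' hαpos.le
    -- use α * v{istar} < ρ * OPT univ
    have h2 : α * (E - 1) * OPT univ - 2 * E * (ρ * OPT univ) ≤ 3 * E * (α * v S) := by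
      nlinarith [h1, hlt, hE0]
    -- multiply by (α + 1) > 0
    have h3 : (α + 1) * (α * (E - 1) * OPT univ - 2 * E * (ρ * OPT univ))
        ≤ (α + 1) * (3 * E * (α * v S)) :=
      mul_le_mul_of_nonneg_left h2 (by linarith)
    -- quadratic inequality times OPT ≥ 0
    have h4 : 3 * E * α * OPT univ
        ≤ (α + 1) * (α * (E - 1) * OPT univ - 2 * E * (ρ * OPT univ)) := by
      have heq : (α + 1) * (α * (E - 1) * OPT univ - 2 * E * (ρ * OPT univ))
          - 3 * E * α * OPT univ
          = ((E - 1) * α ^ 2 - (2 * (ρ + 1) * E + 1) * α - 2 * E * ρ) * OPT univ := by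
        ring
      linarith [mul_nonneg hfpos hO0, heq]
    have h5 : 3 * E * α * OPT univ ≤ 3 * E * α * ((α + 1) * v S) := by
      have h6 : (α + 1) * (3 * E * (α * v S)) = 3 * E * α * ((α + 1) * v S) := by ring
      rw [← h6]; exact le_trans h4 h3
    have h3Eα : (0:ℝ) < 3 * E * α := by positivity
    exact (mul_le_mul_iff_right₀ h3Eα).mp h5
end
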